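/- arXiv:2402.02965 — 2 statements merged into one kernel-verified Lean document; each statement's English description precedes it below -/
import Mathlib

section
/- Let A and H be Hopf quasigroups and Ψ : H⊗A → A⊗H an a-comonoidal distributive law of H over A. Then the wreath product A ⊗_Ψ H, i.e. the object A⊗H with unit η_A⊗η_H, product μ = (μ_A⊗μ_H)∘(A⊗Ψ⊗H), tensor-product comonoid structure, and antipode λ = Ψ∘(λ_H⊗λ_A)∘c_{A,H}, is a Hopf quasigroup. -/
open TensorProduct

noncomputable section

/-- A Hopf quasigroup over a commutative ring `R` (Klim–Majid), given by a unital magma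
and comonoid structure on `H` whose counit and comultiplication are unital magma morphisms,
together with an antipode satisfying the four Hopf quasigroup identities. -/
structure HopfQuasigroup (R : Type*) [CommRing R] (H : Type*) [AddCommGroup H] [Module R H] :
    Type _ where
  mul : H ⊗[R] H →ₗ[R] H
  unit : H
  counit : H →ₗ[R] R
  comul : H →ₗ[R] H ⊗[R] H
  antipode : H →ₗ[R] H
  mul_unit_left : ∀ h : H, mul (unit ⊗ₜ[R] h) = h
  mul_unit_right : ∀ h : H, mul (h ⊗ₜ[R] unit) = h
  coassoc : (TensorProduct.assoc R H H H).toLinearMap ∘ₗ comul.rTensor H ∘ₗ comul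
      = comul.lTensor H ∘ₗ comul
  counit_left : (TensorProduct.lid R H).toLinearMap ∘ₗ counit.rTensor H ∘ₗ comul = LinearMap.id
  counit_right : (TensorProduct.rid R H).toLinearMap ∘ₗ counit.lTensor H ∘ₗ comul = LinearMap.id
  counit_unit : counit unit = 1
  counit_mul : counit ∘ₗ mul
      = (TensorProduct.lid R R).toLinearMap ∘ₗ TensorProduct.map counit counit
  comul_unit : comul unit = unit ⊗ₜ[R] unit
  comul_mul : comul ∘ₗ mul = TensorProduct.map mul mul
      ∘ₗ (TensorProduct.tensorTensorTensorComm R H H H H).toLinearMap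
      ∘ₗ TensorProduct.map comul comul
  antipode_lH₁ : mul ∘ₗ TensorProduct.map antipode mul
      ∘ₗ (TensorProduct.assoc R H H H).toLinearMap ∘ₗ comul.rTensor H
      = (TensorProduct.lid R H).toLinearMap ∘ₗ counit.rTensor H
  antipode_lH₂ : mul ∘ₗ mul.lTensor H ∘ₗ (antipode.rTensor H).lTensor H
      ∘ₗ (TensorProduct.assoc R H H H).toLinearMap ∘ₗ comul.rTensor H
      = (TensorProduct.lid R H).toLinearMap ∘ₗ counit.rTensor H
  antipode_rH₁ : mul ∘ₗ mul.rTensor H ∘ₗ (TensorProduct.assoc R H H H).symm.toLinearMap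
      ∘ₗ (antipode.rTensor H).lTensor H ∘ₗ comul.lTensor H
      = (TensorProduct.rid R H).toLinearMap ∘ₗ counit.lTensor H
  antipode_rH₂ : mul ∘ₗ TensorProduct.map mul antipode
      ∘ₗ (TensorProduct.assoc R H H H).symm.toLinearMap ∘ₗ comul.lTensor H
      = (TensorProduct.rid R H).toLinearMap ∘ₗ counit.lTensor H

section DistLaw

variable {R : Type*} [CommRing R]

/-- The tensor product comonoid comultiplication on `X ⊗ Y`. -/
def comulT {X Y : Type*} [AddCommGroup X] [Module R X] [AddCommGroup Y] [Module R Y]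
    (hX : HopfQuasigroup R X) (hY : HopfQuasigroup R Y) :
    X ⊗[R] Y →ₗ[R] (X ⊗[R] Y) ⊗[R] (X ⊗[R] Y) :=
  (TensorProduct.tensorTensorTensorComm R X X Y Y).toLinearMap
    ∘ₗ TensorProduct.map hX.comul hY.comul

/-- The tensor product comonoid counit on `X ⊗ Y`. -/
def counitT {X Y : Type*} [AddCommGroup X] [Module R X] [AddCommGroup Y] [Module R Y]
    (hX : HopfQuasigroup R X) (hY : HopfQuasigroup R Y) : X ⊗[R] Y →ₗ[R] R :=
  (TensorProduct.lid R R).toLinearMap ∘ₗ TensorProduct.map hX.counit hY.counit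

variable {A H : Type*} [AddCommGroup A] [Module R A] [AddCommGroup H] [Module R H]

/-- (dl1): `Ψ∘(H⊗μ_A)∘(λ_H⊗λ_A⊗A) = (μ_A⊗H)∘(A⊗Ψ)∘(Ψ⊗A)∘(λ_H⊗λ_A⊗A)`. -/
def DL1 (hA : HopfQuasigroup R A) (hH : HopfQuasigroup R H)
    (Ψ : H ⊗[R] A →ₗ[R] A ⊗[R] H) : Prop :=
  Ψ ∘ₗ hA.mul.lTensor H ∘ₗ TensorProduct.map hH.antipode (hA.antipode.rTensor A)
    = hA.mul.rTensor H ∘ₗ (TensorProduct.assoc R A A H).symm.toLinearMap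
      ∘ₗ Ψ.lTensor A ∘ₗ (TensorProduct.assoc R A H A).toLinearMap
      ∘ₗ Ψ.rTensor A ∘ₗ (TensorProduct.assoc R H A A).symm.toLinearMap
      ∘ₗ TensorProduct.map hH.antipode (hA.antipode.rTensor A)

/-- Untwisted version of (dl1): `Ψ∘(H⊗μ_A) = (μ_A⊗H)∘(A⊗Ψ)∘(Ψ⊗A)`. -/
def DL1' (hA : HopfQuasigroup R A) (hH : HopfQuasigroup R H)
    (Ψ : H ⊗[R] A →ₗ[R] A ⊗[R] H) : Prop :=
  Ψ ∘ₗ hA.mul.lTensor H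
    = hA.mul.rTensor H ∘ₗ (TensorProduct.assoc R A A H).symm.toLinearMap
      ∘ₗ Ψ.lTensor A ∘ₗ (TensorProduct.assoc R A H A).toLinearMap
      ∘ₗ Ψ.rTensor A ∘ₗ (TensorProduct.assoc R H A A).symm.toLinearMap

/-- (dl2): `Ψ∘(μ_H⊗A)∘(H⊗λ_H⊗λ_A) = (A⊗μ_H)∘(Ψ⊗H)∘(H⊗Ψ)∘(H⊗λ_H⊗λ_A)`. -/
def DL2 (hA : HopfQuasigroup R A) (hH : HopfQuasigroup R H)
    (Ψ : H ⊗[R] A →ₗ[R] A ⊗[R] H) : Prop :=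
  Ψ ∘ₗ hH.mul.rTensor A ∘ₗ TensorProduct.map (hH.antipode.lTensor H) hA.antipode
    = hH.mul.lTensor A ∘ₗ (TensorProduct.assoc R A H H).toLinearMap
      ∘ₗ Ψ.rTensor H ∘ₗ (TensorProduct.assoc R H A H).symm.toLinearMap
      ∘ₗ Ψ.lTensor H ∘ₗ (TensorProduct.assoc R H H A).toLinearMap
      ∘ₗ TensorProduct.map (hH.antipode.lTensor H) hA.antipode

/-- Untwisted version of (dl2): `Ψ∘(μ_H⊗A) = (A⊗μ_H)∘(Ψ⊗H)∘(H⊗Ψ)`. -/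
def DL2' (hA : HopfQuasigroup R A) (hH : HopfQuasigroup R H)
    (Ψ : H ⊗[R] A →ₗ[R] A ⊗[R] H) : Prop :=
  Ψ ∘ₗ hH.mul.rTensor A
    = hH.mul.lTensor A ∘ₗ (TensorProduct.assoc R A H H).toLinearMap
      ∘ₗ Ψ.rTensor H ∘ₗ (TensorProduct.assoc R H A H).symm.toLinearMap
      ∘ₗ Ψ.lTensor H ∘ₗ (TensorProduct.assoc R H H A).toLinearMap

/-- (dl3): `Ψ∘(H⊗η_A) = η_A⊗H`. -/
def DL3 (hA : HopfQuasigroup R A) (hH : HopfQuasigroup R H)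
    (Ψ : H ⊗[R] A →ₗ[R] A ⊗[R] H) : Prop :=
  ∀ h : H, Ψ (h ⊗ₜ[R] hA.unit) = hA.unit ⊗ₜ[R] h

/-- (dl4): `Ψ∘(η_H⊗A) = A⊗η_H`. -/
def DL4 (hA : HopfQuasigroup R A) (hH : HopfQuasigroup R H)
    (Ψ : H ⊗[R] A →ₗ[R] A ⊗[R] H) : Prop :=
  ∀ a : A, Ψ (hH.unit ⊗ₜ[R] a) = a ⊗ₜ[R] hH.unit

/-- (cdl1): `δ_{A⊗H}∘Ψ = (Ψ⊗Ψ)∘δ_{H⊗A}`. -/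
def CDL1 (hA : HopfQuasigroup R A) (hH : HopfQuasigroup R H)
    (Ψ : H ⊗[R] A →ₗ[R] A ⊗[R] H) : Prop :=
  comulT hA hH ∘ₗ Ψ = TensorProduct.map Ψ Ψ ∘ₗ comulT hH hA

/-- (cdl2): `(ε_A⊗ε_H)∘Ψ = ε_H⊗ε_A`. -/
def CDL2 (hA : HopfQuasigroup R A) (hH : HopfQuasigroup R H)
    (Ψ : H ⊗[R] A →ₗ[R] A ⊗[R] H) : Prop :=
  counitT hA hH ∘ₗ Ψ = counitT hH hA

/-- (adl1): `(A⊗μ_H)∘(Ψ⊗μ_H)∘(H⊗Ψ⊗H)∘(((λ_H⊗H)∘δ_H)⊗A⊗H) = ε_H⊗A⊗H`. -/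
def ADL1 (hA : HopfQuasigroup R A) (hH : HopfQuasigroup R H)
    (Ψ : H ⊗[R] A →ₗ[R] A ⊗[R] H) : Prop :=
  hH.mul.lTensor A ∘ₗ (TensorProduct.assoc R A H H).toLinearMap
      ∘ₗ TensorProduct.map Ψ hH.mul
      ∘ₗ (TensorProduct.assoc R H A (H ⊗[R] H)).symm.toLinearMap
      ∘ₗ ((TensorProduct.assoc R A H H).toLinearMap).lTensor H
      ∘ₗ (Ψ.rTensor H).lTensor H
      ∘ₗ ((TensorProduct.assoc R H A H).symm.toLinearMap).lTensor H
      ∘ₗ (TensorProduct.assoc R H H (A ⊗[R] H)).toLinearMap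
      ∘ₗ ((hH.antipode.rTensor H ∘ₗ hH.comul).rTensor (A ⊗[R] H))
    = (TensorProduct.lid R (A ⊗[R] H)).toLinearMap ∘ₗ hH.counit.rTensor (A ⊗[R] H)

/-- (adl2): `(A⊗μ_H)∘(Ψ⊗μ_H)∘(H⊗Ψ⊗H)∘(((H⊗λ_H)∘δ_H)⊗A⊗H) = ε_H⊗A⊗H`. -/
def ADL2 (hA : HopfQuasigroup R A) (hH : HopfQuasigroup R H)
    (Ψ : H ⊗[R] A →ₗ[R] A ⊗[R] H) : Prop :=
  hH.mul.lTensor A ∘ₗ (TensorProduct.assoc R A H H).toLinearMap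
      ∘ₗ TensorProduct.map Ψ hH.mul
      ∘ₗ (TensorProduct.assoc R H A (H ⊗[R] H)).symm.toLinearMap
      ∘ₗ ((TensorProduct.assoc R A H H).toLinearMap).lTensor H
      ∘ₗ (Ψ.rTensor H).lTensor H
      ∘ₗ ((TensorProduct.assoc R H A H).symm.toLinearMap).lTensor H
      ∘ₗ (TensorProduct.assoc R H H (A ⊗[R] H)).toLinearMap
      ∘ₗ ((hH.antipode.lTensor H ∘ₗ hH.comul).rTensor (A ⊗[R] H))
    = (TensorProduct.lid R (A ⊗[R] H)).toLinearMap ∘ₗ hH.counit.rTensor (A ⊗[R] H)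

/-- (adl3): `(μ_A⊗H)∘(μ_A⊗Ψ)∘(A⊗Ψ⊗A)∘(A⊗H⊗((λ_A⊗A)∘δ_A)) = A⊗H⊗ε_A`. -/
def ADL3 (hA : HopfQuasigroup R A) (hH : HopfQuasigroup R H)
    (Ψ : H ⊗[R] A →ₗ[R] A ⊗[R] H) : Prop :=
  hA.mul.rTensor H ∘ₗ (TensorProduct.assoc R A A H).symm.toLinearMap
      ∘ₗ TensorProduct.map hA.mul Ψ
      ∘ₗ (TensorProduct.assoc R A A (H ⊗[R] A)).symm.toLinearMap
      ∘ₗ ((TensorProduct.assoc R A H A).toLinearMap).lTensor A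
      ∘ₗ (Ψ.rTensor A).lTensor A
      ∘ₗ ((TensorProduct.assoc R H A A).symm.toLinearMap).lTensor A
      ∘ₗ (TensorProduct.assoc R A H (A ⊗[R] A)).toLinearMap
      ∘ₗ ((hA.antipode.rTensor A ∘ₗ hA.comul).lTensor (A ⊗[R] H))
    = (TensorProduct.rid R (A ⊗[R] H)).toLinearMap ∘ₗ hA.counit.lTensor (A ⊗[R] H)

/-- (adl4): `(μ_A⊗H)∘(μ_A⊗Ψ)∘(A⊗Ψ⊗A)∘(A⊗H⊗((A⊗λ_A)∘δ_A)) = A⊗H⊗ε_A`. -/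
def ADL4 (hA : HopfQuasigroup R A) (hH : HopfQuasigroup R H)
    (Ψ : H ⊗[R] A →ₗ[R] A ⊗[R] H) : Prop :=
  hA.mul.rTensor H ∘ₗ (TensorProduct.assoc R A A H).symm.toLinearMap
      ∘ₗ TensorProduct.map hA.mul Ψ
      ∘ₗ (TensorProduct.assoc R A A (H ⊗[R] A)).symm.toLinearMap
      ∘ₗ ((TensorProduct.assoc R A H A).toLinearMap).lTensor A
      ∘ₗ (Ψ.rTensor A).lTensor A
      ∘ₗ ((TensorProduct.assoc R H A A).symm.toLinearMap).lTensor A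
      ∘ₗ (TensorProduct.assoc R A H (A ⊗[R] A)).toLinearMap
      ∘ₗ ((hA.antipode.lTensor A ∘ₗ hA.comul).lTensor (A ⊗[R] H))
    = (TensorProduct.rid R (A ⊗[R] H)).toLinearMap ∘ₗ hA.counit.lTensor (A ⊗[R] H)

/-- `Ψ : H⊗A → A⊗H` is an `a`-comonoidal distributive law of `H` over `A`. -/
def IsAComonoidalDistLaw (hA : HopfQuasigroup R A) (hH : HopfQuasigroup R H)
    (Ψ : H ⊗[R] A →ₗ[R] A ⊗[R] H) : Prop :=
  DL1 hA hH Ψ ∧ DL2 hA hH Ψ ∧ DL3 hA hH Ψ ∧ DL4 hA hH Ψ ∧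
  CDL1 hA hH Ψ ∧ CDL2 hA hH Ψ ∧
  ADL1 hA hH Ψ ∧ ADL2 hA hH Ψ ∧ ADL3 hA hH Ψ ∧ ADL4 hA hH Ψ

/-- The wreath product magma product `μ = (μ_A⊗μ_H)∘(A⊗Ψ⊗H)` on `A ⊗ H`. -/
def wreathMul (hA : HopfQuasigroup R A) (hH : HopfQuasigroup R H)
    (Ψ : H ⊗[R] A →ₗ[R] A ⊗[R] H) :
    (A ⊗[R] H) ⊗[R] (A ⊗[R] H) →ₗ[R] A ⊗[R] H :=
  TensorProduct.map hA.mul hH.mul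
    ∘ₗ (TensorProduct.assoc R A A (H ⊗[R] H)).symm.toLinearMap
    ∘ₗ ((TensorProduct.assoc R A H H).toLinearMap).lTensor A
    ∘ₗ (Ψ.rTensor H).lTensor A
    ∘ₗ ((TensorProduct.assoc R H A H).symm.toLinearMap).lTensor A
    ∘ₗ (TensorProduct.assoc R A H (A ⊗[R] H)).toLinearMap

end DistLaw

section WreathHelpers

variable {R : Type*} [CommRing R] {A H : Type*} [AddCommGroup A] [Module R A]
  [AddCommGroup H] [Module R H]
variable (hA : HopfQuasigroup R A) (hH : HopfQuasigroup R H) (Ψ : H ⊗[R] A →ₗ[R] A ⊗[R] H)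

/-- `a⊗((w⊗g)⊗k) ↦ (a*w)⊗(g*k)` -/
def wGlue : A ⊗[R] ((A ⊗[R] H) ⊗[R] H) →ₗ[R] A ⊗[R] H :=
  TensorProduct.map hA.mul hH.mul
    ∘ₗ (TensorProduct.assoc R (A ⊗[R] A) H H).toLinearMap
    ∘ₗ ((TensorProduct.assoc R A A H).symm.toLinearMap).rTensor H
    ∘ₗ (TensorProduct.assoc R A (A ⊗[R] H) H).symm.toLinearMap

@[simp] lemma wGlue_tmul (a w : A) (g k : H) :
    wGlue hA hH (a ⊗ₜ[R] ((w ⊗ₜ[R] g) ⊗ₜ[R] k)) = hA.mul (a ⊗ₜ w) ⊗ₜ[R] hH.mul (g ⊗ₜ k) := by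
  simp [wGlue]

/-- `(c⊗e)⊗d ↦ (c·Ψ(e⊗d)ᴬ)⊗Ψ(e⊗d)ᴴ` -/
def wE : (A ⊗[R] H) ⊗[R] A →ₗ[R] A ⊗[R] H :=
  hA.mul.rTensor H ∘ₗ (TensorProduct.assoc R A A H).symm.toLinearMap
    ∘ₗ Ψ.lTensor A ∘ₗ (TensorProduct.assoc R A H A).toLinearMap

/-- `x⊗(c⊗e) ↦ Ψ(x⊗c)ᴬ⊗(Ψ(x⊗c)ᴴ·e)` -/
def wEd : H ⊗[R] (A ⊗[R] H) →ₗ[R] A ⊗[R] H :=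
  hH.mul.lTensor A ∘ₗ (TensorProduct.assoc R A H H).toLinearMap
    ∘ₗ Ψ.rTensor H ∘ₗ (TensorProduct.assoc R H A H).symm.toLinearMap

/-- `(c⊗e)⊗k ↦ c⊗(e·k)` -/
def wM : (A ⊗[R] H) ⊗[R] H →ₗ[R] A ⊗[R] H :=
  hH.mul.lTensor A ∘ₗ (TensorProduct.assoc R A H H).toLinearMap

@[simp] lemma wM_tmul (c : A) (e k : H) :
    wM hH ((c ⊗ₜ[R] e) ⊗ₜ[R] k) = c ⊗ₜ[R] hH.mul (e ⊗ₜ k) := by simp [wM]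

/-- `a⊗(w⊗g) ↦ (a·w)⊗g` -/
def wLam : A ⊗[R] (A ⊗[R] H) →ₗ[R] A ⊗[R] H :=
  hA.mul.rTensor H ∘ₗ (TensorProduct.assoc R A A H).symm.toLinearMap

@[simp] lemma wLam_tmul (a w : A) (g : H) :
    wLam hA (a ⊗ₜ[R] (w ⊗ₜ[R] g)) = hA.mul (a ⊗ₜ w) ⊗ₜ[R] g := by simp [wLam]

def wN : (A ⊗[R] H) ⊗[R] (A ⊗[R] H) →ₗ[R] A ⊗[R] H :=
  wLam hA ∘ₗ (wEd hH Ψ).lTensor A ∘ₗ (TensorProduct.assoc R A H (A ⊗[R] H)).toLinearMap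

/-- `x⊗((w⊗g)⊗k) ↦ Ψ(x⊗w)ᴬ ⊗ Ψ(x⊗w)ᴴ·(g·k)` -/
def wD0 : H ⊗[R] ((A ⊗[R] H) ⊗[R] H) →ₗ[R] A ⊗[R] H :=
  wM hH ∘ₗ TensorProduct.map Ψ hH.mul
    ∘ₗ (TensorProduct.assoc R H A (H ⊗[R] H)).symm.toLinearMap
    ∘ₗ ((TensorProduct.assoc R A H H).toLinearMap).lTensor H

/-- `(a₁⊗a₂)⊗w ↦ S(a₁)·(a₂·w)` -/
def mA2 : (A ⊗[R] A) ⊗[R] A →ₗ[R] A :=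
  hA.mul ∘ₗ TensorProduct.map hA.antipode hA.mul ∘ₗ (TensorProduct.assoc R A A A).toLinearMap

/-- `(a₁⊗a₂)⊗w ↦ a₁·(S(a₂)·w)` -/
def mA2' : (A ⊗[R] A) ⊗[R] A →ₗ[R] A :=
  hA.mul ∘ₗ hA.mul.lTensor A ∘ₗ (hA.antipode.rTensor A).lTensor A
    ∘ₗ (TensorProduct.assoc R A A A).toLinearMap

/-- `g⊗(k₁⊗k₂) ↦ (g·S k₁)·k₂` -/
def mH2 : H ⊗[R] (H ⊗[R] H) →ₗ[R] H :=
  hH.mul ∘ₗ hH.mul.rTensor H ∘ₗ (TensorProduct.assoc R H H H).symm.toLinearMap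
    ∘ₗ (hH.antipode.rTensor H).lTensor H

/-- `g⊗(k₁⊗k₂) ↦ (g·k₁)·S k₂` -/
def mH2' : H ⊗[R] (H ⊗[R] H) →ₗ[R] H :=
  hH.mul ∘ₗ TensorProduct.map hH.mul hH.antipode
    ∘ₗ (TensorProduct.assoc R H H H).symm.toLinearMap

/-- `h₁⊗(u⊗((w⊗g)⊗k)) ↦ wM (Ψ(S h₁ ⊗ mA2(u⊗w)) ⊗ (g·k))` -/
def wD : H ⊗[R] ((A ⊗[R] A) ⊗[R] ((A ⊗[R] H) ⊗[R] H)) →ₗ[R] A ⊗[R] H :=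
  wM hH ∘ₗ TensorProduct.map (Ψ ∘ₗ TensorProduct.map hH.antipode (mA2 hA)) hH.mul
    ∘ₗ (TensorProduct.assoc R H ((A ⊗[R] A) ⊗[R] A) (H ⊗[R] H)).symm.toLinearMap
    ∘ₗ ((TensorProduct.assoc R (A ⊗[R] A) A (H ⊗[R] H)).symm.toLinearMap
        ∘ₗ ((TensorProduct.assoc R A H H).toLinearMap).lTensor (A ⊗[R] A)).lTensor H

/-- `a⊗((c⊗e)⊗d) ↦ ((a·c)·Ψ(e⊗d)ᴬ)⊗Ψ(e⊗d)ᴴ` -/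
def wD3 : A ⊗[R] ((A ⊗[R] H) ⊗[R] A) →ₗ[R] A ⊗[R] H :=
  wLam hA ∘ₗ hA.mul.rTensor (A ⊗[R] H)
    ∘ₗ (TensorProduct.assoc R A A (A ⊗[R] H)).symm.toLinearMap
    ∘ₗ (Ψ.lTensor A ∘ₗ (TensorProduct.assoc R A H A).toLinearMap).lTensor A

def wK4 : ((A ⊗[R] H) ⊗[R] (H ⊗[R] H)) ⊗[R] A →ₗ[R] A ⊗[R] (A ⊗[R] H) :=
  Ψ.lTensor A ∘ₗ (TensorProduct.assoc R A H A).toLinearMap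
    ∘ₗ ((mH2' hH).lTensor A).rTensor A
    ∘ₗ ((TensorProduct.assoc R A H (H ⊗[R] H)).toLinearMap).rTensor A

/-- `a⊗(((c⊗e)⊗v)⊗d) ↦ ((a·c)·Ψ(mH2'(e⊗v)⊗d)ᴬ)⊗Ψ(...)ᴴ` -/
def wD4 : A ⊗[R] (((A ⊗[R] H) ⊗[R] (H ⊗[R] H)) ⊗[R] A) →ₗ[R] A ⊗[R] H :=
  wLam hA ∘ₗ hA.mul.rTensor (A ⊗[R] H)
    ∘ₗ (TensorProduct.assoc R A A (A ⊗[R] H)).symm.toLinearMap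
    ∘ₗ (wK4 hH Ψ).lTensor A

/-- ADL1/ADL2 composite with the `δ_H` part stripped. -/
def wCrest : (H ⊗[R] H) ⊗[R] (A ⊗[R] H) →ₗ[R] A ⊗[R] H :=
  hH.mul.lTensor A ∘ₗ (TensorProduct.assoc R A H H).toLinearMap
      ∘ₗ TensorProduct.map Ψ hH.mul
      ∘ₗ (TensorProduct.assoc R H A (H ⊗[R] H)).symm.toLinearMap
      ∘ₗ ((TensorProduct.assoc R A H H).toLinearMap).lTensor H
      ∘ₗ (Ψ.rTensor H).lTensor H
      ∘ₗ ((TensorProduct.assoc R H A H).symm.toLinearMap).lTensor H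
      ∘ₗ (TensorProduct.assoc R H H (A ⊗[R] H)).toLinearMap

/-- ADL3/ADL4 composite with the `δ_A` part stripped. -/
def wArest : (A ⊗[R] H) ⊗[R] (A ⊗[R] A) →ₗ[R] A ⊗[R] H :=
  hA.mul.rTensor H ∘ₗ (TensorProduct.assoc R A A H).symm.toLinearMap
      ∘ₗ TensorProduct.map hA.mul Ψ
      ∘ₗ (TensorProduct.assoc R A A (H ⊗[R] A)).symm.toLinearMap
      ∘ₗ ((TensorProduct.assoc R A H A).toLinearMap).lTensor A
      ∘ₗ (Ψ.rTensor A).lTensor A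
      ∘ₗ ((TensorProduct.assoc R H A A).symm.toLinearMap).lTensor A
      ∘ₗ (TensorProduct.assoc R A H (A ⊗[R] A)).toLinearMap

end WreathHelpers
section WreathLemmas

variable {R : Type*} [CommRing R] {A H : Type*} [AddCommGroup A] [Module R A]
  [AddCommGroup H] [Module R H]
variable (hA : HopfQuasigroup R A) (hH : HopfQuasigroup R H) (Ψ : H ⊗[R] A →ₗ[R] A ⊗[R] H)

lemma wreathMul_tmul (a b : A) (h k : H) :
    wreathMul hA hH Ψ ((a ⊗ₜ[R] h) ⊗ₜ[R] (b ⊗ₜ[R] k))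
      = wGlue hA hH (a ⊗ₜ[R] (Ψ (h ⊗ₜ[R] b) ⊗ₜ[R] k)) := by
  have : ∀ t : A ⊗[R] H,
      TensorProduct.map hA.mul hH.mul
        ((TensorProduct.assoc R A A (H ⊗[R] H)).symm
          (((TensorProduct.assoc R A H H).toLinearMap).lTensor A (a ⊗ₜ[R] (t ⊗ₜ[R] k))))
      = wGlue hA hH (a ⊗ₜ[R] (t ⊗ₜ[R] k)) := by
    intro t
    induction t using TensorProduct.induction_on with
    | zero => simp [tmul_zero, zero_tmul]
    | tmul w g => simp
    | add x y hx hy =>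
        simp only [tmul_add, add_tmul, map_add] at *
        rw [hx, hy]
  simpa [wreathMul] using this (Ψ (h ⊗ₜ[R] b))

lemma wWL (s : A ⊗[R] H) (d : A) (l : H) :
    wreathMul hA hH Ψ (s ⊗ₜ[R] (d ⊗ₜ[R] l)) = wM hH (wE hA Ψ (s ⊗ₜ[R] d) ⊗ₜ[R] l) := by
  induction s using TensorProduct.induction_on with
  | zero => simp [zero_tmul]
  | tmul c e =>
      rw [wreathMul_tmul]
      have : ∀ t : A ⊗[R] H,
          wGlue hA hH (c ⊗ₜ[R] (t ⊗ₜ[R] l))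
            = wM hH ((hA.mul.rTensor H ((TensorProduct.assoc R A A H).symm (c ⊗ₜ[R] t))) ⊗ₜ[R] l) := by
        intro t
        induction t using TensorProduct.induction_on with
        | zero => simp [tmul_zero, zero_tmul]
        | tmul w g => simp
        | add x y hx hy => simp only [tmul_add, add_tmul, map_add] at *; rw [hx, hy]
      simpa [wE] using this (Ψ (e ⊗ₜ[R] d))
  | add x y hx hy => simp only [tmul_add, add_tmul, map_add] at *; rw [hx, hy]

lemma wWR (a : A) (h : H) (t : A ⊗[R] H) :
    wreathMul hA hH Ψ ((a ⊗ₜ[R] h) ⊗ₜ[R] t) = wLam hA (a ⊗ₜ[R] wEd hH Ψ (h ⊗ₜ[R] t)) := by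
  induction t using TensorProduct.induction_on with
  | zero => simp [tmul_zero]
  | tmul b k =>
      rw [wreathMul_tmul]
      have : ∀ s : A ⊗[R] H,
          wGlue hA hH (a ⊗ₜ[R] (s ⊗ₜ[R] k))
            = wLam hA (a ⊗ₜ[R] (hH.mul.lTensor A ((TensorProduct.assoc R A H H) (s ⊗ₜ[R] k)))) := by
        intro s
        induction s using TensorProduct.induction_on with
        | zero => simp [tmul_zero, zero_tmul]
        | tmul w g => simp
        | add x y hx hy => simp only [tmul_add, add_tmul, map_add] at *; rw [hx, hy]
      simpa [wEd] using this (Ψ (h ⊗ₜ[R] b))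
  | add x y hx hy => simp only [tmul_add, map_add] at *; rw [hx, hy]

lemma wWG (s t : A ⊗[R] H) :
    wreathMul hA hH Ψ (s ⊗ₜ[R] t) = wN hA hH Ψ (s ⊗ₜ[R] t) := by
  induction s using TensorProduct.induction_on with
  | zero => simp [zero_tmul]
  | tmul c e => rw [wWR]; simp [wN]
  | add x y hx hy => simp only [add_tmul, map_add] at *; rw [hx, hy]

end WreathLemmas
section WreathLemmas2

variable {R : Type*} [CommRing R] {A H : Type*} [AddCommGroup A] [Module R A]
  [AddCommGroup H] [Module R H]
variable (hA : HopfQuasigroup R A) (hH : HopfQuasigroup R H) (Ψ : H ⊗[R] A →ₗ[R] A ⊗[R] H)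

lemma wdl1_apply (hdl : DL1 hA hH Ψ) (h : H) (a d : A) :
    wE hA Ψ (Ψ (hH.antipode h ⊗ₜ[R] hA.antipode a) ⊗ₜ[R] d)
      = Ψ (hH.antipode h ⊗ₜ[R] hA.mul (hA.antipode a ⊗ₜ[R] d)) := by
  have := LinearMap.congr_fun hdl (h ⊗ₜ[R] (a ⊗ₜ[R] d))
  simpa [wE] using this.symm

lemma wdl2_apply (hdl : DL2 hA hH Ψ) (x k : H) (b : A) :
    wEd hH Ψ (x ⊗ₜ[R] Ψ (hH.antipode k ⊗ₜ[R] hA.antipode b))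
      = Ψ (hH.mul (x ⊗ₜ[R] hH.antipode k) ⊗ₜ[R] hA.antipode b) := by
  have := LinearMap.congr_fun hdl ((x ⊗ₜ[R] k) ⊗ₜ[R] b)
  simpa [wEd] using this.symm

lemma wla1 (a w : A) :
    mA2 hA (hA.comul a ⊗ₜ[R] w) = hA.counit a • w := by
  have := LinearMap.congr_fun hA.antipode_lH₁ (a ⊗ₜ[R] w)
  simpa [mA2] using this

lemma wla2 (a w : A) :
    mA2' hA (hA.comul a ⊗ₜ[R] w) = hA.counit a • w := by
  have := LinearMap.congr_fun hA.antipode_lH₂ (a ⊗ₜ[R] w)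
  simpa [mA2'] using this

lemma wrh1 (g k : H) :
    mH2 hH (g ⊗ₜ[R] hH.comul k) = hH.counit k • g := by
  have := LinearMap.congr_fun hH.antipode_rH₁ (g ⊗ₜ[R] k)
  simpa [mH2] using this

lemma wrh2 (g k : H) :
    mH2' hH (g ⊗ₜ[R] hH.comul k) = hH.counit k • g := by
  have := LinearMap.congr_fun hH.antipode_rH₂ (g ⊗ₜ[R] k)
  simpa [mH2'] using this

lemma wCrest_tmul (x z : H) (b : A) (k : H) :
    wCrest hH Ψ ((x ⊗ₜ[R] z) ⊗ₜ[R] (b ⊗ₜ[R] k))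
      = wD0 hH Ψ (x ⊗ₜ[R] (Ψ (z ⊗ₜ[R] b) ⊗ₜ[R] k)) := by
  have : ∀ t : A ⊗[R] H,
      (hH.mul.lTensor A ∘ₗ (TensorProduct.assoc R A H H).toLinearMap
        ∘ₗ TensorProduct.map Ψ hH.mul
        ∘ₗ (TensorProduct.assoc R H A (H ⊗[R] H)).symm.toLinearMap
        ∘ₗ ((TensorProduct.assoc R A H H).toLinearMap).lTensor H)
        (x ⊗ₜ[R] (t ⊗ₜ[R] k))
      = wD0 hH Ψ (x ⊗ₜ[R] (t ⊗ₜ[R] k)) := by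
    intro t
    induction t using TensorProduct.induction_on with
    | zero => simp [tmul_zero, zero_tmul]
    | tmul w g => simp [wD0, wM]
    | add x y hx hy => simp only [tmul_add, add_tmul, map_add] at *; rw [hx, hy]
  simpa [wCrest, wD0, wM] using this (Ψ (z ⊗ₜ[R] b))

lemma wArest_tmul (a : A) (h : H) (y₁ y₂ : A) :
    wArest hA Ψ ((a ⊗ₜ[R] h) ⊗ₜ[R] (y₁ ⊗ₜ[R] y₂))
      = wD3 hA Ψ (a ⊗ₜ[R] (Ψ (h ⊗ₜ[R] y₁) ⊗ₜ[R] y₂)) := by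
  have : ∀ t : A ⊗[R] H,
      (hA.mul.rTensor H ∘ₗ (TensorProduct.assoc R A A H).symm.toLinearMap
        ∘ₗ TensorProduct.map hA.mul Ψ
        ∘ₗ (TensorProduct.assoc R A A (H ⊗[R] A)).symm.toLinearMap
        ∘ₗ ((TensorProduct.assoc R A H A).toLinearMap).lTensor A)
        (a ⊗ₜ[R] (t ⊗ₜ[R] y₂))
      = wD3 hA Ψ (a ⊗ₜ[R] (t ⊗ₜ[R] y₂)) := by
    intro t
    induction t using TensorProduct.induction_on with
    | zero => simp [tmul_zero, zero_tmul]
    | tmul w g => simp [wD3, wLam]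
    | add x y hx hy => simp only [tmul_add, add_tmul, map_add] at *; rw [hx, hy]
  simpa [wArest, wD3] using this (Ψ (h ⊗ₜ[R] y₁))

end WreathLemmas2
section WreathLemmas3

variable {R : Type*} [CommRing R] {A H : Type*} [AddCommGroup A] [Module R A]
  [AddCommGroup H] [Module R H]
variable (hA : HopfQuasigroup R A) (hH : HopfQuasigroup R H) (Ψ : H ⊗[R] A →ₗ[R] A ⊗[R] H)

@[simp] lemma wE_tmul (c : A) (e : H) (d : A) :
    wE hA Ψ ((c ⊗ₜ[R] e) ⊗ₜ[R] d) = wLam hA (c ⊗ₜ[R] Ψ (e ⊗ₜ[R] d)) := by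
  simp [wE, wLam]

@[simp] lemma wEd_tmul (x : H) (c : A) (e : H) :
    wEd hH Ψ (x ⊗ₜ[R] (c ⊗ₜ[R] e)) = wM hH (Ψ (x ⊗ₜ[R] c) ⊗ₜ[R] e) := by
  simp [wEd, wM]

@[simp] lemma wD0_tmul (x : H) (w : A) (g k : H) :
    wD0 hH Ψ (x ⊗ₜ[R] ((w ⊗ₜ[R] g) ⊗ₜ[R] k))
      = wM hH (Ψ (x ⊗ₜ[R] w) ⊗ₜ[R] hH.mul (g ⊗ₜ[R] k)) := by
  simp [wD0]

@[simp] lemma wD_tmul (h₁ : H) (u : A ⊗[R] A) (w : A) (g k : H) :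
    wD hA hH Ψ (h₁ ⊗ₜ[R] (u ⊗ₜ[R] ((w ⊗ₜ[R] g) ⊗ₜ[R] k)))
      = wM hH (Ψ (hH.antipode h₁ ⊗ₜ[R] mA2 hA (u ⊗ₜ[R] w)) ⊗ₜ[R] hH.mul (g ⊗ₜ[R] k)) := by
  simp [wD]

@[simp] lemma wD3_tmul (a c : A) (e : H) (d : A) :
    wD3 hA Ψ (a ⊗ₜ[R] ((c ⊗ₜ[R] e) ⊗ₜ[R] d))
      = wLam hA (hA.mul (a ⊗ₜ[R] c) ⊗ₜ[R] Ψ (e ⊗ₜ[R] d)) := by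
  simp [wD3, wLam]

@[simp] lemma wD4_tmul (a c : A) (e : H) (v : H ⊗[R] H) (d : A) :
    wD4 hA hH Ψ (a ⊗ₜ[R] (((c ⊗ₜ[R] e) ⊗ₜ[R] v) ⊗ₜ[R] d))
      = wLam hA (hA.mul (a ⊗ₜ[R] c) ⊗ₜ[R] Ψ (mH2' hH (e ⊗ₜ[R] v) ⊗ₜ[R] d)) := by
  simp [wD4, wK4, wLam]

lemma wWM (a : A) (h : H) (s : A ⊗[R] H) (k : H) :
    wreathMul hA hH Ψ ((a ⊗ₜ[R] h) ⊗ₜ[R] wM hH (s ⊗ₜ[R] k))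
      = wLam hA (a ⊗ₜ[R] wD0 hH Ψ (h ⊗ₜ[R] (s ⊗ₜ[R] k))) := by
  induction s using TensorProduct.induction_on with
  | zero => simp [wM, zero_tmul, tmul_zero]
  | tmul c e =>
      rw [wM_tmul, wreathMul_tmul, wD0_tmul]
      have : ∀ t : A ⊗[R] H, ∀ l : H,
          wGlue hA hH (a ⊗ₜ[R] (t ⊗ₜ[R] l)) = wLam hA (a ⊗ₜ[R] wM hH (t ⊗ₜ[R] l)) := by
        intro t l
        induction t using TensorProduct.induction_on with
        | zero => simp [tmul_zero, zero_tmul]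
        | tmul w g => simp
        | add x y hx hy => simp only [tmul_add, add_tmul, map_add] at *; rw [hx, hy]
      exact this (Ψ (h ⊗ₜ[R] c)) (hH.mul (e ⊗ₜ[R] k))
  | add x y hx hy =>
      simp only [tmul_add, add_tmul, map_add] at *; rw [hx, hy]

lemma wELam (a : A) (t : A ⊗[R] H) (d : A) :
    wE hA Ψ (wLam hA (a ⊗ₜ[R] t) ⊗ₜ[R] d) = wD3 hA Ψ (a ⊗ₜ[R] (t ⊗ₜ[R] d)) := by
  induction t using TensorProduct.induction_on with
  | zero => simp [wLam, tmul_zero, zero_tmul]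
  | tmul c e => rw [wLam_tmul, wE_tmul, wD3_tmul]
  | add x y hx hy => simp only [tmul_add, add_tmul, map_add] at *; rw [hx, hy]

lemma wD_delta (h₁ : H) (a : A) (z : (A ⊗[R] H) ⊗[R] H) :
    wD hA hH Ψ (h₁ ⊗ₜ[R] (hA.comul a ⊗ₜ[R] z))
      = hA.counit a • wD0 hH Ψ (hH.antipode h₁ ⊗ₜ[R] z) := by
  induction z using TensorProduct.induction_on with
  | zero => simp [tmul_zero]
  | tmul t k =>
      induction t using TensorProduct.induction_on with
      | zero => simp [tmul_zero, zero_tmul]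
      | tmul w g => rw [wD_tmul, wD0_tmul, wla1]; simp [tmul_smul, smul_tmul]
      | add x y hx hy =>
          simp only [tmul_add, add_tmul, map_add, smul_add] at *; rw [hx, hy]
  | add x y hx hy =>
      simp only [tmul_add, add_tmul, map_add, smul_add] at *; rw [hx, hy]

lemma wD4_delta (a : A) (t : A ⊗[R] H) (k : H) (d : A) :
    wD4 hA hH Ψ (a ⊗ₜ[R] ((t ⊗ₜ[R] hH.comul k) ⊗ₜ[R] d))
      = hH.counit k • wD3 hA Ψ (a ⊗ₜ[R] (t ⊗ₜ[R] d)) := by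
  induction t using TensorProduct.induction_on with
  | zero => simp [zero_tmul, tmul_zero]
  | tmul c e => rw [wD4_tmul, wD3_tmul, wrh2]; simp [tmul_smul, smul_tmul]
  | add x y hx hy =>
      simp only [tmul_add, add_tmul, map_add, smul_add] at *; rw [hx, hy]

end WreathLemmas3
section WreathComonoid

variable {R : Type*} [CommRing R] {A H : Type*} [AddCommGroup A] [Module R A]
  [AddCommGroup H] [Module R H]
variable (hA : HopfQuasigroup R A) (hH : HopfQuasigroup R H) (Ψ : H ⊗[R] A →ₗ[R] A ⊗[R] H)

lemma w_counit_left :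
    (TensorProduct.lid R (A ⊗[R] H)).toLinearMap ∘ₗ (counitT hA hH).rTensor (A ⊗[R] H)
        ∘ₗ comulT hA hH = LinearMap.id := by
  apply TensorProduct.ext'
  intro a h
  have key : ∀ (u : A ⊗[R] A) (v : H ⊗[R] H),
      (TensorProduct.lid R (A ⊗[R] H))
        ((counitT hA hH).rTensor (A ⊗[R] H)
          ((TensorProduct.tensorTensorTensorComm R A A H H) (u ⊗ₜ[R] v)))
      = ((TensorProduct.lid R A).toLinearMap ∘ₗ hA.counit.rTensor A) u
          ⊗ₜ[R] ((TensorProduct.lid R H).toLinearMap ∘ₗ hH.counit.rTensor H) v := by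
    intro u v
    induction u using TensorProduct.induction_on with
    | zero => simp [zero_tmul]
    | tmul a₁ a₂ =>
        induction v using TensorProduct.induction_on with
        | zero => simp [tmul_zero]
        | tmul h₁ h₂ => simp [counitT, smul_tmul, tmul_smul, smul_smul, mul_comm]
        | add x y hx hy => simp only [tmul_add, add_tmul, map_add] at *; rw [hx, hy]
    | add x y hx hy => simp only [tmul_add, add_tmul, map_add] at *; rw [hx, hy]
  simp only [LinearMap.comp_apply, LinearEquiv.coe_coe, comulT, TensorProduct.map_tmul,
    LinearMap.id_apply]
  rw [key]
  have h1 := LinearMap.congr_fun hA.counit_left a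
  have h2 := LinearMap.congr_fun hH.counit_left h
  simp only [LinearMap.comp_apply, LinearMap.id_apply, LinearEquiv.coe_coe] at h1 h2 ⊢
  rw [h1, h2]

lemma w_counit_right :
    (TensorProduct.rid R (A ⊗[R] H)).toLinearMap ∘ₗ (counitT hA hH).lTensor (A ⊗[R] H)
        ∘ₗ comulT hA hH = LinearMap.id := by
  apply TensorProduct.ext'
  intro a h
  have key : ∀ (u : A ⊗[R] A) (v : H ⊗[R] H),
      (TensorProduct.rid R (A ⊗[R] H))
        ((counitT hA hH).lTensor (A ⊗[R] H)
          ((TensorProduct.tensorTensorTensorComm R A A H H) (u ⊗ₜ[R] v)))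
      = ((TensorProduct.rid R A).toLinearMap ∘ₗ hA.counit.lTensor A) u
          ⊗ₜ[R] ((TensorProduct.rid R H).toLinearMap ∘ₗ hH.counit.lTensor H) v := by
    intro u v
    induction u using TensorProduct.induction_on with
    | zero => simp [zero_tmul]
    | tmul a₁ a₂ =>
        induction v using TensorProduct.induction_on with
        | zero => simp [tmul_zero]
        | tmul h₁ h₂ => simp [counitT, smul_tmul, tmul_smul, smul_smul, mul_comm]
        | add x y hx hy => simp only [tmul_add, add_tmul, map_add] at *; rw [hx, hy]
    | add x y hx hy => simp only [tmul_add, add_tmul, map_add] at *; rw [hx, hy]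
  simp only [LinearMap.comp_apply, LinearEquiv.coe_coe, comulT, TensorProduct.map_tmul,
    LinearMap.id_apply]
  rw [key]
  have h1 := LinearMap.congr_fun hA.counit_right a
  have h2 := LinearMap.congr_fun hH.counit_right h
  simp only [LinearMap.comp_apply, LinearMap.id_apply, LinearEquiv.coe_coe] at h1 h2 ⊢
  rw [h1, h2]

end WreathComonoid
section WreathCoassoc

variable {R : Type*} [CommRing R] {A H : Type*} [AddCommGroup A] [Module R A]
  [AddCommGroup H] [Module R H]
variable (hA : HopfQuasigroup R A) (hH : HopfQuasigroup R H)

def wP : (A ⊗[R] (A ⊗[R] A)) ⊗[R] (H ⊗[R] (H ⊗[R] H))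
    →ₗ[R] (A ⊗[R] H) ⊗[R] ((A ⊗[R] H) ⊗[R] (A ⊗[R] H)) :=
  ((TensorProduct.tensorTensorTensorComm R A A H H).toLinearMap).lTensor (A ⊗[R] H)
    ∘ₗ (TensorProduct.tensorTensorTensorComm R A (A ⊗[R] A) H (H ⊗[R] H)).toLinearMap

@[simp] lemma wP_tmul (a b c : A) (h g l : H) :
    wP ((a ⊗ₜ[R] (b ⊗ₜ[R] c)) ⊗ₜ[R] (h ⊗ₜ[R] (g ⊗ₜ[R] l)))
      = (a ⊗ₜ[R] h) ⊗ₜ[R] ((b ⊗ₜ[R] g) ⊗ₜ[R] (c ⊗ₜ[R] l)) := by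
  simp [wP]

lemma w_coassoc :
    (TensorProduct.assoc R (A ⊗[R] H) (A ⊗[R] H) (A ⊗[R] H)).toLinearMap
        ∘ₗ (comulT hA hH).rTensor (A ⊗[R] H) ∘ₗ comulT hA hH
      = (comulT hA hH).lTensor (A ⊗[R] H) ∘ₗ comulT hA hH := by
  apply TensorProduct.ext'
  intro a h
  have keyL : ∀ (u : A ⊗[R] A) (v : H ⊗[R] H),
      (TensorProduct.assoc R (A ⊗[R] H) (A ⊗[R] H) (A ⊗[R] H))
        ((comulT hA hH).rTensor (A ⊗[R] H)
          ((TensorProduct.tensorTensorTensorComm R A A H H) (u ⊗ₜ[R] v)))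
      = wP (((TensorProduct.assoc R A A A) (hA.comul.rTensor A u))
          ⊗ₜ[R] ((TensorProduct.assoc R H H H) (hH.comul.rTensor H v))) := by
    intro u v
    induction u using TensorProduct.induction_on with
    | zero => simp [zero_tmul]
    | tmul a₁ a₂ =>
        induction v using TensorProduct.induction_on with
        | zero => simp [tmul_zero]
        | tmul h₁ h₂ =>
            simp only [TensorProduct.tensorTensorTensorComm_tmul, LinearMap.rTensor_tmul,
              TensorProduct.assoc_tmul, comulT, LinearMap.comp_apply, LinearEquiv.coe_coe,
              TensorProduct.map_tmul]
            generalize hA.comul a₁ = s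
            generalize hH.comul h₁ = r
            induction s using TensorProduct.induction_on with
            | zero => simp [zero_tmul]
            | tmul b c =>
                induction r using TensorProduct.induction_on with
                | zero => simp [zero_tmul, tmul_zero]
                | tmul g l => simp
                | add x y hx hy => simp only [tmul_add, add_tmul, map_add] at *; rw [hx, hy]
            | add x y hx hy => simp only [tmul_add, add_tmul, map_add] at *; rw [hx, hy]
        | add x y hx hy => simp only [tmul_add, add_tmul, map_add] at *; rw [hx, hy]
    | add x y hx hy => simp only [tmul_add, add_tmul, map_add] at *; rw [hx, hy]
  have keyR : ∀ (u : A ⊗[R] A) (v : H ⊗[R] H),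
      (comulT hA hH).lTensor (A ⊗[R] H)
          ((TensorProduct.tensorTensorTensorComm R A A H H) (u ⊗ₜ[R] v))
      = wP ((hA.comul.lTensor A u) ⊗ₜ[R] (hH.comul.lTensor H v)) := by
    intro u v
    induction u using TensorProduct.induction_on with
    | zero => simp [zero_tmul]
    | tmul a₁ a₂ =>
        induction v using TensorProduct.induction_on with
        | zero => simp [tmul_zero]
        | tmul h₁ h₂ =>
            simp only [TensorProduct.tensorTensorTensorComm_tmul, LinearMap.lTensor_tmul,
              comulT, LinearMap.comp_apply, LinearEquiv.coe_coe, TensorProduct.map_tmul]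
            generalize hA.comul a₂ = s
            generalize hH.comul h₂ = r
            induction s using TensorProduct.induction_on with
            | zero => simp [zero_tmul]
            | tmul b c =>
                induction r using TensorProduct.induction_on with
                | zero => simp [zero_tmul, tmul_zero]
                | tmul g l => simp
                | add x y hx hy => simp only [tmul_add, add_tmul, map_add] at *; rw [hx, hy]
            | add x y hx hy => simp only [tmul_add, add_tmul, map_add] at *; rw [hx, hy]
        | add x y hx hy => simp only [tmul_add, add_tmul, map_add] at *; rw [hx, hy]
    | add x y hx hy => simp only [tmul_add, add_tmul, map_add] at *; rw [hx, hy]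
  have hca := LinearMap.congr_fun hA.coassoc a
  have hch := LinearMap.congr_fun hH.coassoc h
  simp only [LinearMap.comp_apply, LinearEquiv.coe_coe] at hca hch ⊢
  rw [show comulT hA hH (a ⊗ₜ[R] h)
      = (TensorProduct.tensorTensorTensorComm R A A H H) (hA.comul a ⊗ₜ[R] hH.comul h) by
    simp [comulT]]
  rw [keyL, keyR, hca, hch]

end WreathCoassoc
section WreathComulMul

variable {R : Type*} [CommRing R] {A H : Type*} [AddCommGroup A] [Module R A]
  [AddCommGroup H] [Module R H]
variable (hA : HopfQuasigroup R A) (hH : HopfQuasigroup R H) (Ψ : H ⊗[R] A →ₗ[R] A ⊗[R] H)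

lemma w_counit_mul (hc : CDL2 hA hH Ψ) :
    counitT hA hH ∘ₗ wreathMul hA hH Ψ
      = (TensorProduct.lid R R).toLinearMap
          ∘ₗ TensorProduct.map (counitT hA hH) (counitT hA hH) := by
  apply TensorProduct.ext_fourfold'
  intro a h b k
  have claim : ∀ t : A ⊗[R] H,
      counitT hA hH (wGlue hA hH (a ⊗ₜ[R] (t ⊗ₜ[R] k)))
        = (hA.counit a * hH.counit k) * counitT hA hH t := by
    intro t
    induction t using TensorProduct.induction_on with
    | zero => simp [tmul_zero, zero_tmul]
    | tmul w g =>
        have e1 := LinearMap.congr_fun hA.counit_mul (a ⊗ₜ[R] w)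
        have e2 := LinearMap.congr_fun hH.counit_mul (g ⊗ₜ[R] k)
        simp only [LinearMap.comp_apply, LinearEquiv.coe_coe, TensorProduct.map_tmul,
          TensorProduct.lid_tmul, smul_eq_mul] at e1 e2
        simp [counitT, e1, e2]
        ring
    | add x y hx hy => simp only [tmul_add, add_tmul, map_add, mul_add] at *; rw [hx, hy]
  have e3 := LinearMap.congr_fun hc (h ⊗ₜ[R] b)
  simp only [LinearMap.comp_apply, LinearEquiv.coe_coe] at e3
  simp only [LinearMap.comp_apply, LinearEquiv.coe_coe, TensorProduct.map_tmul,
    TensorProduct.lid_tmul, smul_eq_mul, wreathMul_tmul hA hH Ψ]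
  rw [claim, e3]
  simp [counitT]
  ring

def wQ : (A ⊗[R] A) ⊗[R] (((A ⊗[R] H) ⊗[R] (A ⊗[R] H)) ⊗[R] (H ⊗[R] H))
    →ₗ[R] (A ⊗[R] H) ⊗[R] (A ⊗[R] H) :=
  TensorProduct.map (wGlue hA hH) (wGlue hA hH)
    ∘ₗ (TensorProduct.tensorTensorTensorComm R A A ((A ⊗[R] H) ⊗[R] H)
          ((A ⊗[R] H) ⊗[R] H)).toLinearMap
    ∘ₗ ((TensorProduct.tensorTensorTensorComm R (A ⊗[R] H) (A ⊗[R] H) H H).toLinearMap).lTensor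
          (A ⊗[R] A)

@[simp] lemma wQ_tmul (a₁ a₂ : A) (W₁ W₂ : A ⊗[R] H) (k₁ k₂ : H) :
    wQ hA hH ((a₁ ⊗ₜ[R] a₂) ⊗ₜ[R] ((W₁ ⊗ₜ[R] W₂) ⊗ₜ[R] (k₁ ⊗ₜ[R] k₂)))
      = wGlue hA hH (a₁ ⊗ₜ[R] (W₁ ⊗ₜ[R] k₁)) ⊗ₜ[R] wGlue hA hH (a₂ ⊗ₜ[R] (W₂ ⊗ₜ[R] k₂)) := by
  simp [wQ]

lemma w_claim1 (a : A) (t : A ⊗[R] H) (k : H) :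
    comulT hA hH (wGlue hA hH (a ⊗ₜ[R] (t ⊗ₜ[R] k)))
      = wQ hA hH (hA.comul a ⊗ₜ[R] ((comulT hA hH t) ⊗ₜ[R] hH.comul k)) := by
  induction t using TensorProduct.induction_on with
  | zero => simp [tmul_zero, zero_tmul]
  | tmul w g =>
      have e1 := LinearMap.congr_fun hA.comul_mul (a ⊗ₜ[R] w)
      have e2 := LinearMap.congr_fun hH.comul_mul (g ⊗ₜ[R] k)
      simp only [LinearMap.comp_apply, LinearEquiv.coe_coe, TensorProduct.map_tmul] at e1 e2
      rw [wGlue_tmul]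
      rw [show comulT hA hH (hA.mul (a ⊗ₜ[R] w) ⊗ₜ[R] hH.mul (g ⊗ₜ[R] k))
          = (TensorProduct.tensorTensorTensorComm R A A H H)
              ((hA.comul (hA.mul (a ⊗ₜ[R] w))) ⊗ₜ[R] (hH.comul (hH.mul (g ⊗ₜ[R] k)))) by
        simp [comulT]]
      rw [e1, e2]
      rw [show comulT hA hH (w ⊗ₜ[R] g)
          = (TensorProduct.tensorTensorTensorComm R A A H H)
              ((hA.comul w) ⊗ₜ[R] (hH.comul g)) by simp [comulT]]
      generalize hA.comul a = u
      generalize hA.comul w = r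
      generalize hH.comul g = s
      generalize hH.comul k = v
      induction u using TensorProduct.induction_on with
      | zero => simp [zero_tmul]
      | tmul a₁ a₂ =>
          induction r using TensorProduct.induction_on with
          | zero => simp [zero_tmul, tmul_zero]
          | tmul w₁ w₂ =>
              induction s using TensorProduct.induction_on with
              | zero => simp [zero_tmul, tmul_zero]
              | tmul g₁ g₂ =>
                  induction v using TensorProduct.induction_on with
                  | zero => simp [zero_tmul, tmul_zero]
                  | tmul k₁ k₂ => simp
                  | add x y hx hy => simp only [tmul_add, add_tmul, map_add] at *; rw [hx, hy]
              | add x y hx hy => simp only [tmul_add, add_tmul, map_add] at *; rw [hx, hy]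
          | add x y hx hy => simp only [tmul_add, add_tmul, map_add] at *; rw [hx, hy]
      | add x y hx hy => simp only [tmul_add, add_tmul, map_add] at *; rw [hx, hy]
  | add x y hx hy => simp only [tmul_add, add_tmul, map_add] at *; rw [hx, hy]

lemma w_claim2 (u : A ⊗[R] A) (s : H ⊗[R] H) (r : A ⊗[R] A) (v : H ⊗[R] H) :
    wQ hA hH (u ⊗ₜ[R] ((TensorProduct.map Ψ Ψ
          ((TensorProduct.tensorTensorTensorComm R H H A A) (s ⊗ₜ[R] r))) ⊗ₜ[R] v))
      = TensorProduct.map (wreathMul hA hH Ψ) (wreathMul hA hH Ψ)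
          ((TensorProduct.tensorTensorTensorComm R (A ⊗[R] H) (A ⊗[R] H) (A ⊗[R] H) (A ⊗[R] H))
            (((TensorProduct.tensorTensorTensorComm R A A H H) (u ⊗ₜ[R] s))
              ⊗ₜ[R] ((TensorProduct.tensorTensorTensorComm R A A H H) (r ⊗ₜ[R] v)))) := by
  induction u using TensorProduct.induction_on with
  | zero => simp [zero_tmul]
  | tmul a₁ a₂ =>
      induction s using TensorProduct.induction_on with
      | zero => simp [zero_tmul, tmul_zero]
      | tmul h₁ h₂ =>
          induction r using TensorProduct.induction_on with
          | zero => simp [zero_tmul, tmul_zero]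
          | tmul b₁ b₂ =>
              induction v using TensorProduct.induction_on with
              | zero => simp [zero_tmul, tmul_zero]
              | tmul k₁ k₂ => simp [wreathMul_tmul hA hH Ψ]
              | add x y hx hy => simp only [tmul_add, add_tmul, map_add] at *; rw [hx, hy]
          | add x y hx hy => simp only [tmul_add, add_tmul, map_add] at *; rw [hx, hy]
      | add x y hx hy => simp only [tmul_add, add_tmul, map_add] at *; rw [hx, hy]
  | add x y hx hy => simp only [tmul_add, add_tmul, map_add] at *; rw [hx, hy]

lemma w_comul_mul (hc : CDL1 hA hH Ψ) :
    comulT hA hH ∘ₗ wreathMul hA hH Ψ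
      = TensorProduct.map (wreathMul hA hH Ψ) (wreathMul hA hH Ψ)
          ∘ₗ (TensorProduct.tensorTensorTensorComm R (A ⊗[R] H) (A ⊗[R] H)
                (A ⊗[R] H) (A ⊗[R] H)).toLinearMap
          ∘ₗ TensorProduct.map (comulT hA hH) (comulT hA hH) := by
  apply TensorProduct.ext_fourfold'
  intro a h b k
  have e3 := LinearMap.congr_fun hc (h ⊗ₜ[R] b)
  simp only [LinearMap.comp_apply, LinearEquiv.coe_coe] at e3
  simp only [LinearMap.comp_apply, LinearEquiv.coe_coe, TensorProduct.map_tmul,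
    wreathMul_tmul hA hH Ψ]
  rw [w_claim1, e3]
  rw [show comulT hH hA (h ⊗ₜ[R] b)
      = (TensorProduct.tensorTensorTensorComm R H H A A)
          ((hH.comul h) ⊗ₜ[R] (hA.comul b)) by simp [comulT]]
  rw [w_claim2]
  rw [show comulT hA hH (a ⊗ₜ[R] h)
      = (TensorProduct.tensorTensorTensorComm R A A H H)
          ((hA.comul a) ⊗ₜ[R] (hH.comul h)) by simp [comulT]]
  rw [show comulT hA hH (b ⊗ₜ[R] k)
      = (TensorProduct.tensorTensorTensorComm R A A H H)
          ((hA.comul b) ⊗ₜ[R] (hH.comul k)) by simp [comulT]]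

end WreathComulMul
section WreathAntipode

variable {R : Type*} [CommRing R] {A H : Type*} [AddCommGroup A] [Module R A]
  [AddCommGroup H] [Module R H]
variable (hA : HopfQuasigroup R A) (hH : HopfQuasigroup R H) (Ψ : H ⊗[R] A →ₗ[R] A ⊗[R] H)

/-- The wreath antipode. -/
def wAnt : A ⊗[R] H →ₗ[R] A ⊗[R] H :=
  Ψ ∘ₗ TensorProduct.map hH.antipode hA.antipode ∘ₗ (TensorProduct.comm R A H).toLinearMap

@[simp] lemma wAnt_tmul (a : A) (h : H) :
    wAnt hA hH Ψ (a ⊗ₜ[R] h) = Ψ (hH.antipode h ⊗ₜ[R] hA.antipode a) := by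
  simp [wAnt]

lemma w_antipode_lH₁ (hdl1 : DL1 hA hH Ψ) (hadl1 : ADL1 hA hH Ψ) :
    wreathMul hA hH Ψ ∘ₗ TensorProduct.map (wAnt hA hH Ψ) (wreathMul hA hH Ψ)
        ∘ₗ (TensorProduct.assoc R (A ⊗[R] H) (A ⊗[R] H) (A ⊗[R] H)).toLinearMap
        ∘ₗ (comulT hA hH).rTensor (A ⊗[R] H)
      = (TensorProduct.lid R (A ⊗[R] H)).toLinearMap
          ∘ₗ (counitT hA hH).rTensor (A ⊗[R] H) := by
  apply TensorProduct.ext_fourfold'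
  intro a h b k
  have adl : wCrest hH Ψ ((hH.antipode.rTensor H (hH.comul h)) ⊗ₜ[R] (b ⊗ₜ[R] k))
      = hH.counit h • (b ⊗ₜ[R] k) := by
    have := LinearMap.congr_fun hadl1 (h ⊗ₜ[R] (b ⊗ₜ[R] k))
    simpa [wCrest] using this
  have main : ∀ v : H ⊗[R] H,
      wreathMul hA hH Ψ (TensorProduct.map (wAnt hA hH Ψ) (wreathMul hA hH Ψ)
        ((TensorProduct.assoc R (A ⊗[R] H) (A ⊗[R] H) (A ⊗[R] H))
          ((TensorProduct.tensorTensorTensorComm R A A H H) (hA.comul a ⊗ₜ[R] v)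
            ⊗ₜ[R] (b ⊗ₜ[R] k))))
      = hA.counit a • wCrest hH Ψ ((hH.antipode.rTensor H v) ⊗ₜ[R] (b ⊗ₜ[R] k)) := by
    intro v
    induction v using TensorProduct.induction_on with
    | zero => simp [tmul_zero, zero_tmul]
    | tmul h₁ h₂ =>
        have sub : ∀ u : A ⊗[R] A,
            wreathMul hA hH Ψ (TensorProduct.map (wAnt hA hH Ψ) (wreathMul hA hH Ψ)
              ((TensorProduct.assoc R (A ⊗[R] H) (A ⊗[R] H) (A ⊗[R] H))
                ((TensorProduct.tensorTensorTensorComm R A A H H) (u ⊗ₜ[R] (h₁ ⊗ₜ[R] h₂))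
                  ⊗ₜ[R] (b ⊗ₜ[R] k))))
            = wD hA hH Ψ (h₁ ⊗ₜ[R] (u ⊗ₜ[R] (Ψ (h₂ ⊗ₜ[R] b) ⊗ₜ[R] k))) := by
          intro u
          induction u using TensorProduct.induction_on with
          | zero => simp [tmul_zero, zero_tmul]
          | tmul a₁ a₂ =>
              simp only [TensorProduct.tensorTensorTensorComm_tmul, TensorProduct.assoc_tmul,
                TensorProduct.map_tmul, wAnt_tmul, wreathMul_tmul hA hH Ψ]
              generalize Ψ (h₂ ⊗ₜ[R] b) = t
              induction t using TensorProduct.induction_on with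
              | zero => simp [tmul_zero, zero_tmul]
              | tmul w g =>
                  rw [wGlue_tmul, wWL hA hH Ψ, wdl1_apply hA hH Ψ hdl1, wD_tmul]
                  simp [mA2]
              | add x y hx hy =>
                  simp only [tmul_add, add_tmul, map_add] at *; rw [hx, hy]
          | add x y hx hy => simp only [tmul_add, add_tmul, map_add] at *; rw [hx, hy]
        rw [sub (hA.comul a), wD_delta hA hH Ψ, LinearMap.rTensor_tmul, wCrest_tmul]
    | add x y hx hy =>
        simp only [tmul_add, add_tmul, map_add, smul_add] at *; rw [hx, hy]
  simp only [LinearMap.comp_apply, LinearEquiv.coe_coe, LinearMap.rTensor_tmul]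
  rw [show comulT hA hH (a ⊗ₜ[R] h)
      = (TensorProduct.tensorTensorTensorComm R A A H H)
          ((hA.comul a) ⊗ₜ[R] (hH.comul h)) by simp [comulT]]
  rw [main (hH.comul h), adl]
  simp [counitT, smul_smul]

lemma w_antipode_lH₂ (hdl1 : DL1 hA hH Ψ) (hadl2 : ADL2 hA hH Ψ) :
    wreathMul hA hH Ψ ∘ₗ (wreathMul hA hH Ψ).lTensor (A ⊗[R] H)
        ∘ₗ ((wAnt hA hH Ψ).rTensor (A ⊗[R] H)).lTensor (A ⊗[R] H)
        ∘ₗ (TensorProduct.assoc R (A ⊗[R] H) (A ⊗[R] H) (A ⊗[R] H)).toLinearMap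
        ∘ₗ (comulT hA hH).rTensor (A ⊗[R] H)
      = (TensorProduct.lid R (A ⊗[R] H)).toLinearMap
          ∘ₗ (counitT hA hH).rTensor (A ⊗[R] H) := by
  apply TensorProduct.ext_fourfold'
  intro a h b k
  have main : ∀ u : A ⊗[R] A,
      wreathMul hA hH Ψ ((wreathMul hA hH Ψ).lTensor (A ⊗[R] H)
        (((wAnt hA hH Ψ).rTensor (A ⊗[R] H)).lTensor (A ⊗[R] H)
          ((TensorProduct.assoc R (A ⊗[R] H) (A ⊗[R] H) (A ⊗[R] H))
            ((TensorProduct.tensorTensorTensorComm R A A H H) (u ⊗ₜ[R] hH.comul h)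
              ⊗ₜ[R] (b ⊗ₜ[R] k)))))
      = hH.counit h • ((mA2' hA (u ⊗ₜ[R] b)) ⊗ₜ[R] k) := by
    intro u
    induction u using TensorProduct.induction_on with
    | zero => simp [tmul_zero, zero_tmul]
    | tmul a₁ a₂ =>
        have adl : wCrest hH Ψ ((hH.antipode.lTensor H (hH.comul h))
              ⊗ₜ[R] ((hA.mul (hA.antipode a₂ ⊗ₜ[R] b)) ⊗ₜ[R] k))
            = hH.counit h • ((hA.mul (hA.antipode a₂ ⊗ₜ[R] b)) ⊗ₜ[R] k) := by
          have := LinearMap.congr_fun hadl2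
            (h ⊗ₜ[R] ((hA.mul (hA.antipode a₂ ⊗ₜ[R] b)) ⊗ₜ[R] k))
          simpa [wCrest] using this
        have claimv : ∀ v : H ⊗[R] H,
            wreathMul hA hH Ψ ((wreathMul hA hH Ψ).lTensor (A ⊗[R] H)
              (((wAnt hA hH Ψ).rTensor (A ⊗[R] H)).lTensor (A ⊗[R] H)
                ((TensorProduct.assoc R (A ⊗[R] H) (A ⊗[R] H) (A ⊗[R] H))
                  ((TensorProduct.tensorTensorTensorComm R A A H H)
                      ((a₁ ⊗ₜ[R] a₂) ⊗ₜ[R] v) ⊗ₜ[R] (b ⊗ₜ[R] k)))))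
            = wLam hA (a₁ ⊗ₜ[R] wCrest hH Ψ ((hH.antipode.lTensor H v)
                ⊗ₜ[R] ((hA.mul (hA.antipode a₂ ⊗ₜ[R] b)) ⊗ₜ[R] k))) := by
          intro v
          induction v using TensorProduct.induction_on with
          | zero => simp [tmul_zero, zero_tmul, wLam]
          | tmul h₁ h₂ =>
              simp only [TensorProduct.tensorTensorTensorComm_tmul, TensorProduct.assoc_tmul,
                LinearMap.lTensor_tmul, LinearMap.rTensor_tmul, wAnt_tmul]
              rw [wWL hA hH Ψ, wdl1_apply hA hH Ψ hdl1, wWM hA hH Ψ, wCrest_tmul]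
          | add x y hx hy =>
              simp only [tmul_add, add_tmul, map_add, smul_add] at *; rw [hx, hy]
        rw [claimv (hH.comul h), adl]
        simp [mA2', wLam, tmul_smul]
    | add x y hx hy => simp only [tmul_add, add_tmul, map_add, smul_add] at *; rw [hx, hy]
  simp only [LinearMap.comp_apply, LinearEquiv.coe_coe, LinearMap.rTensor_tmul]
  rw [show comulT hA hH (a ⊗ₜ[R] h)
      = (TensorProduct.tensorTensorTensorComm R A A H H)
          ((hA.comul a) ⊗ₜ[R] (hH.comul h)) by simp [comulT]]
  rw [main (hA.comul a), wla2]
  simp [counitT, smul_smul, smul_tmul, tmul_smul, mul_comm]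

lemma w_antipode_rH₁ (hdl2 : DL2 hA hH Ψ) (hadl3 : ADL3 hA hH Ψ) :
    wreathMul hA hH Ψ ∘ₗ (wreathMul hA hH Ψ).rTensor (A ⊗[R] H)
        ∘ₗ (TensorProduct.assoc R (A ⊗[R] H) (A ⊗[R] H) (A ⊗[R] H)).symm.toLinearMap
        ∘ₗ ((wAnt hA hH Ψ).rTensor (A ⊗[R] H)).lTensor (A ⊗[R] H)
        ∘ₗ (comulT hA hH).lTensor (A ⊗[R] H)
      = (TensorProduct.rid R (A ⊗[R] H)).toLinearMap
          ∘ₗ (counitT hA hH).lTensor (A ⊗[R] H) := by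
  apply TensorProduct.ext_fourfold'
  intro a h b k
  have main : ∀ v : H ⊗[R] H,
      wreathMul hA hH Ψ ((wreathMul hA hH Ψ).rTensor (A ⊗[R] H)
        ((TensorProduct.assoc R (A ⊗[R] H) (A ⊗[R] H) (A ⊗[R] H)).symm
          ((a ⊗ₜ[R] h) ⊗ₜ[R] ((wAnt hA hH Ψ).rTensor (A ⊗[R] H)
            ((TensorProduct.tensorTensorTensorComm R A A H H) (hA.comul b ⊗ₜ[R] v))))))
      = hA.counit b • (a ⊗ₜ[R] mH2 hH (h ⊗ₜ[R] v)) := by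
    intro v
    induction v using TensorProduct.induction_on with
    | zero => simp [tmul_zero, zero_tmul]
    | tmul k₁ k₂ =>
        have adl : wArest hA Ψ ((a ⊗ₜ[R] hH.mul (h ⊗ₜ[R] hH.antipode k₁))
              ⊗ₜ[R] (hA.antipode.rTensor A (hA.comul b)))
            = hA.counit b • (a ⊗ₜ[R] hH.mul (h ⊗ₜ[R] hH.antipode k₁)) := by
          have := LinearMap.congr_fun hadl3
            ((a ⊗ₜ[R] hH.mul (h ⊗ₜ[R] hH.antipode k₁)) ⊗ₜ[R] b)
          simpa [wArest] using this
        have sub : ∀ u : A ⊗[R] A,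
            wreathMul hA hH Ψ ((wreathMul hA hH Ψ).rTensor (A ⊗[R] H)
              ((TensorProduct.assoc R (A ⊗[R] H) (A ⊗[R] H) (A ⊗[R] H)).symm
                ((a ⊗ₜ[R] h) ⊗ₜ[R] ((wAnt hA hH Ψ).rTensor (A ⊗[R] H)
                  ((TensorProduct.tensorTensorTensorComm R A A H H)
                    (u ⊗ₜ[R] (k₁ ⊗ₜ[R] k₂)))))))
            = wM hH (wArest hA Ψ ((a ⊗ₜ[R] hH.mul (h ⊗ₜ[R] hH.antipode k₁))
                ⊗ₜ[R] (hA.antipode.rTensor A u)) ⊗ₜ[R] k₂) := by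
          intro u
          induction u using TensorProduct.induction_on with
          | zero => simp [tmul_zero, zero_tmul]
          | tmul b₁ b₂ =>
              simp only [TensorProduct.tensorTensorTensorComm_tmul, LinearMap.rTensor_tmul,
                TensorProduct.assoc_symm_tmul, wAnt_tmul]
              rw [wWR hA hH Ψ, wdl2_apply hA hH Ψ hdl2, wWL hA hH Ψ, wELam hA Ψ,
                ← wArest_tmul hA Ψ]
          | add x y hx hy => simp only [tmul_add, add_tmul, map_add] at *; rw [hx, hy]
        rw [sub (hA.comul b), adl]
        simp [mH2, TensorProduct.smul_tmul', wM_tmul]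
    | add x y hx hy => simp only [tmul_add, add_tmul, map_add, smul_add] at *; rw [hx, hy]
  simp only [LinearMap.comp_apply, LinearEquiv.coe_coe, LinearMap.lTensor_tmul]
  rw [show comulT hA hH (b ⊗ₜ[R] k)
      = (TensorProduct.tensorTensorTensorComm R A A H H)
          ((hA.comul b) ⊗ₜ[R] (hH.comul k)) by simp [comulT]]
  rw [main (hH.comul k), wrh1]
  simp [counitT, smul_smul, smul_tmul, tmul_smul, mul_comm]

lemma w_antipode_rH₂ (hdl2 : DL2 hA hH Ψ) (hadl4 : ADL4 hA hH Ψ) :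
    wreathMul hA hH Ψ ∘ₗ TensorProduct.map (wreathMul hA hH Ψ) (wAnt hA hH Ψ)
        ∘ₗ (TensorProduct.assoc R (A ⊗[R] H) (A ⊗[R] H) (A ⊗[R] H)).symm.toLinearMap
        ∘ₗ (comulT hA hH).lTensor (A ⊗[R] H)
      = (TensorProduct.rid R (A ⊗[R] H)).toLinearMap
          ∘ₗ (counitT hA hH).lTensor (A ⊗[R] H) := by
  apply TensorProduct.ext_fourfold'
  intro a h b k
  have adl : wArest hA Ψ ((a ⊗ₜ[R] h) ⊗ₜ[R] (hA.antipode.lTensor A (hA.comul b)))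
      = hA.counit b • (a ⊗ₜ[R] h) := by
    have := LinearMap.congr_fun hadl4 ((a ⊗ₜ[R] h) ⊗ₜ[R] b)
    simpa [wArest] using this
  have main : ∀ u : A ⊗[R] A,
      wreathMul hA hH Ψ (TensorProduct.map (wreathMul hA hH Ψ) (wAnt hA hH Ψ)
        ((TensorProduct.assoc R (A ⊗[R] H) (A ⊗[R] H) (A ⊗[R] H)).symm
          ((a ⊗ₜ[R] h) ⊗ₜ[R] ((TensorProduct.tensorTensorTensorComm R A A H H)
            (u ⊗ₜ[R] hH.comul k)))))
      = hH.counit k • wArest hA Ψ ((a ⊗ₜ[R] h) ⊗ₜ[R] (hA.antipode.lTensor A u)) := by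
    intro u
    induction u using TensorProduct.induction_on with
    | zero => simp [tmul_zero, zero_tmul]
    | tmul b₁ b₂ =>
        have claimv : ∀ v : H ⊗[R] H,
            wreathMul hA hH Ψ (TensorProduct.map (wreathMul hA hH Ψ) (wAnt hA hH Ψ)
              ((TensorProduct.assoc R (A ⊗[R] H) (A ⊗[R] H) (A ⊗[R] H)).symm
                ((a ⊗ₜ[R] h) ⊗ₜ[R] ((TensorProduct.tensorTensorTensorComm R A A H H)
                  ((b₁ ⊗ₜ[R] b₂) ⊗ₜ[R] v)))))
            = wD4 hA hH Ψ (a ⊗ₜ[R] ((Ψ (h ⊗ₜ[R] b₁) ⊗ₜ[R] v) ⊗ₜ[R] hA.antipode b₂)) := by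
          intro v
          induction v using TensorProduct.induction_on with
          | zero => simp [tmul_zero, zero_tmul]
          | tmul k₁ k₂ =>
              simp only [TensorProduct.tensorTensorTensorComm_tmul,
                TensorProduct.assoc_symm_tmul, TensorProduct.map_tmul, wAnt_tmul,
                wreathMul_tmul hA hH Ψ]
              generalize Ψ (h ⊗ₜ[R] b₁) = t
              induction t using TensorProduct.induction_on with
              | zero => simp [tmul_zero, zero_tmul]
              | tmul c e =>
                  rw [wGlue_tmul, wWR hA hH Ψ, wdl2_apply hA hH Ψ hdl2, wD4_tmul]
                  simp [mH2']
              | add x y hx hy => simp only [tmul_add, add_tmul, map_add] at *; rw [hx, hy]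
          | add x y hx hy => simp only [tmul_add, add_tmul, map_add] at *; rw [hx, hy]
        rw [claimv (hH.comul k), wD4_delta hA hH Ψ, ← wArest_tmul hA Ψ]
        simp [LinearMap.lTensor_tmul]
    | add x y hx hy => simp only [tmul_add, add_tmul, map_add, smul_add] at *; rw [hx, hy]
  simp only [LinearMap.comp_apply, LinearEquiv.coe_coe, LinearMap.lTensor_tmul]
  rw [show comulT hA hH (b ⊗ₜ[R] k)
      = (TensorProduct.tensorTensorTensorComm R A A H H)
          ((hA.comul b) ⊗ₜ[R] (hH.comul k)) by simp [comulT]]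
  rw [main (hA.comul b), adl]
  simp [counitT, smul_smul, smul_tmul, tmul_smul, mul_comm]

end WreathAntipode
/-- The wreath product Hopf quasigroup: for an `a`-comonoidal distributive law
`Ψ : H⊗A → A⊗H` between Hopf quasigroups, the object `A⊗H` with unit `η_A⊗η_H`,
wreath product `μ = (μ_A⊗μ_H)∘(A⊗Ψ⊗H)`, tensor product comonoid structure and
antipode `λ = Ψ∘(λ_H⊗λ_A)∘c_{A,H}` is a Hopf quasigroup. -/
theorem wreathProduct_hopfQuasigroup {R : Type*} [CommRing R] {A H : Type*}
    [AddCommGroup A] [Module R A] [AddCommGroup H] [Module R H]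
    (hA : HopfQuasigroup R A) (hH : HopfQuasigroup R H)
    (Ψ : H ⊗[R] A →ₗ[R] A ⊗[R] H) (hΨ : IsAComonoidalDistLaw hA hH Ψ) :
    ∃ W : HopfQuasigroup R (A ⊗[R] H),
      W.mul = wreathMul hA hH Ψ ∧
      W.unit = hA.unit ⊗ₜ[R] hH.unit ∧
      W.counit = counitT hA hH ∧
      W.comul = comulT hA hH ∧
      W.antipode = Ψ ∘ₗ TensorProduct.map hH.antipode hA.antipode
        ∘ₗ (TensorProduct.comm R A H).toLinearMap := by
  obtain ⟨hdl1, hdl2, hdl3, hdl4, hcdl1, hcdl2, hadl1, hadl2, hadl3, hadl4⟩ := hΨ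
  refine ⟨{
      mul := wreathMul hA hH Ψ
      unit := hA.unit ⊗ₜ[R] hH.unit
      counit := counitT hA hH
      comul := comulT hA hH
      antipode := wAnt hA hH Ψ
      mul_unit_left := ?_
      mul_unit_right := ?_
      coassoc := w_coassoc hA hH
      counit_left := w_counit_left hA hH
      counit_right := w_counit_right hA hH
      counit_unit := ?_
      counit_mul := w_counit_mul hA hH Ψ hcdl2
      comul_unit := ?_
      comul_mul := w_comul_mul hA hH Ψ hcdl1
      antipode_lH₁ := w_antipode_lH₁ hA hH Ψ hdl1 hadl1
      antipode_lH₂ := w_antipode_lH₂ hA hH Ψ hdl1 hadl2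
      antipode_rH₁ := w_antipode_rH₁ hA hH Ψ hdl2 hadl3
      antipode_rH₂ := w_antipode_rH₂ hA hH Ψ hdl2 hadl4 },
    rfl, rfl, rfl, rfl, rfl⟩
  · -- mul_unit_left
    intro x
    induction x using TensorProduct.induction_on with
    | zero => simp
    | tmul b k => rw [wreathMul_tmul, hdl4 b, wGlue_tmul, hA.mul_unit_left, hH.mul_unit_left]
    | add x y hx hy => rw [tmul_add, map_add, hx, hy]
  · -- mul_unit_right
    intro x
    induction x using TensorProduct.induction_on with
    | zero => simp
    | tmul a g => rw [wreathMul_tmul, hdl3 g, wGlue_tmul, hA.mul_unit_right, hH.mul_unit_right]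
    | add x y hx hy => rw [add_tmul, map_add, hx, hy]
  · -- counit_unit
    simp [counitT, hA.counit_unit, hH.counit_unit]
  · -- comul_unit
    simp [comulT, hA.comul_unit, hH.comul_unit]

end
end

section
/- If H and A are Hopf algebras (i.e. associative Hopf quasigroups) and Ψ : H⊗A → A⊗H is a distributive law between the underlying monoids (Ψ∘(H⊗μ_A)=(μ_A⊗H)∘(A⊗Ψ)∘(Ψ⊗A), Ψ∘(μ_H⊗A)=(A⊗μ_H)∘(Ψ⊗H)∘(H⊗Ψ), Ψ∘(H⊗η_A)=η_A⊗H, Ψ∘(η_H⊗A)=A⊗η_H), then the four a-comonoidal identities hold automatically: (A⊗μ_H)∘(Ψ⊗μ_H)∘(H⊗Ψ⊗H)∘(((λ_H⊗H)∘δ_H)⊗A⊗H)=ε_H⊗A⊗H and its three companions. -/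
open TensorProduct

noncomputable section

section Aux

variable {R : Type*} [CommRing R] {A H : Type*}
    [AddCommGroup A] [Module R A] [AddCommGroup H] [Module R H]

/-- Key computation for (adl1)/(adl2): if `μ_H y = c • 1`, the inner composite of
the a-comonoidal identity collapses to `c • (a ⊗ g)`. -/
lemma keyH (hA : HopfQuasigroup R A) (hH : HopfQuasigroup R H)
    (hHassoc : hH.mul ∘ₗ hH.mul.rTensor H
      = hH.mul ∘ₗ hH.mul.lTensor H ∘ₗ (TensorProduct.assoc R H H H).toLinearMap)
    (Ψ : H ⊗[R] A →ₗ[R] A ⊗[R] H)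
    (h2 : DL2' hA hH Ψ) (h4 : DL4 hA hH Ψ)
    (y : H ⊗[R] H) (c : R) (hc : hH.mul y = c • hH.unit) (a : A) (g : H) :
    (hH.mul.lTensor A ∘ₗ (TensorProduct.assoc R A H H).toLinearMap
      ∘ₗ TensorProduct.map Ψ hH.mul
      ∘ₗ (TensorProduct.assoc R H A (H ⊗[R] H)).symm.toLinearMap
      ∘ₗ ((TensorProduct.assoc R A H H).toLinearMap).lTensor H
      ∘ₗ (Ψ.rTensor H).lTensor H
      ∘ₗ ((TensorProduct.assoc R H A H).symm.toLinearMap).lTensor H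
      ∘ₗ (TensorProduct.assoc R H H (A ⊗[R] H)).toLinearMap)
      (y ⊗ₜ[R] (a ⊗ₜ[R] g)) = c • (a ⊗ₜ[R] g) := by
  set rg : H →ₗ[R] H := hH.mul ∘ₗ (TensorProduct.mk R H H).flip g with hrg
  have key : ∀ y : H ⊗[R] H,
      (hH.mul.lTensor A ∘ₗ (TensorProduct.assoc R A H H).toLinearMap
        ∘ₗ TensorProduct.map Ψ hH.mul
        ∘ₗ (TensorProduct.assoc R H A (H ⊗[R] H)).symm.toLinearMap
        ∘ₗ ((TensorProduct.assoc R A H H).toLinearMap).lTensor H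
        ∘ₗ (Ψ.rTensor H).lTensor H
        ∘ₗ ((TensorProduct.assoc R H A H).symm.toLinearMap).lTensor H
        ∘ₗ (TensorProduct.assoc R H H (A ⊗[R] H)).toLinearMap)
        (y ⊗ₜ[R] (a ⊗ₜ[R] g))
      = (rg.lTensor A) (Ψ (hH.mul y ⊗ₜ[R] a)) := by
    intro y
    induction y using TensorProduct.induction_on with
    | zero => simp
    | add u v hu hv =>
        simp only [TensorProduct.add_tmul, map_add, LinearMap.add_apply] at hu hv ⊢
        rw [hu, hv]
    | tmul p q =>
        have e2 : Ψ (hH.mul (p ⊗ₜ[R] q) ⊗ₜ[R] a)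
            = (hH.mul.lTensor A ∘ₗ (TensorProduct.assoc R A H H).toLinearMap
              ∘ₗ Ψ.rTensor H ∘ₗ (TensorProduct.assoc R H A H).symm.toLinearMap
              ∘ₗ Ψ.lTensor H ∘ₗ (TensorProduct.assoc R H H A).toLinearMap)
              ((p ⊗ₜ[R] q) ⊗ₜ[R] a) := by
          have := congrArg (fun f => f ((p ⊗ₜ[R] q) ⊗ₜ[R] a)) h2
          simpa using this
        rw [e2]
        simp only [LinearMap.comp_apply, TensorProduct.assoc_tmul,
          TensorProduct.assoc_symm_tmul, LinearMap.lTensor_tmul, LinearMap.rTensor_tmul,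
          TensorProduct.map_tmul]
        have step2 : ∀ (m : H) (w : A ⊗[R] H),
            (hH.mul.lTensor A) ((TensorProduct.assoc R A H H)
              (w ⊗ₜ[R] hH.mul (m ⊗ₜ[R] g)))
            = (rg.lTensor A) ((hH.mul.lTensor A) ((TensorProduct.assoc R A H H)
              (w ⊗ₜ[R] m))) := by
          intro m w
          induction w using TensorProduct.induction_on with
          | zero => simp
          | add u v hu hv =>
              simp only [TensorProduct.add_tmul, map_add, hu, hv]
          | tmul c' k =>
              simp only [TensorProduct.assoc_tmul, LinearMap.lTensor_tmul]
              congr 1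
              have := congrArg (fun f => f ((k ⊗ₜ[R] m) ⊗ₜ[R] g)) hHassoc
              simp only [LinearMap.comp_apply, LinearEquiv.coe_coe, LinearMap.rTensor_tmul,
                LinearMap.lTensor_tmul, TensorProduct.assoc_tmul] at this
              simp only [hrg, LinearMap.comp_apply, TensorProduct.mk_apply,
                LinearMap.flip_apply]
              exact this.symm
        have step : ∀ z : A ⊗[R] H,
            (hH.mul.lTensor A) ((TensorProduct.assoc R A H H)
              ((TensorProduct.map Ψ hH.mul)
                ((TensorProduct.assoc R H A (H ⊗[R] H)).symm
                  (p ⊗ₜ[R] (TensorProduct.assoc R A H H) (z ⊗ₜ[R] g)))))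
            = (rg.lTensor A) ((hH.mul.lTensor A) ((TensorProduct.assoc R A H H)
              ((Ψ.rTensor H) ((TensorProduct.assoc R H A H).symm (p ⊗ₜ[R] z))))) := by
          intro z
          induction z using TensorProduct.induction_on with
          | zero => simp
          | add u v hu hv =>
              simp only [TensorProduct.tmul_add, TensorProduct.add_tmul, map_add, hu, hv]
          | tmul b m =>
              simp only [TensorProduct.assoc_tmul, TensorProduct.assoc_symm_tmul,
                LinearMap.lTensor_tmul, LinearMap.rTensor_tmul, TensorProduct.map_tmul]
              exact step2 m (Ψ (p ⊗ₜ[R] b))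
        exact step (Ψ (q ⊗ₜ[R] a))
  rw [key y, hc]
  have e : ((c • hH.unit) ⊗ₜ[R] a : H ⊗[R] A) = c • (hH.unit ⊗ₜ[R] a) :=
    (TensorProduct.smul_tmul' c hH.unit a).symm
  rw [e, map_smul, map_smul, h4 a]
  simp [hrg, hH.mul_unit_left, TensorProduct.smul_tmul']

/-- Key computation for (adl3)/(adl4): if `μ_A y = c • 1`, the inner composite of
the a-comonoidal identity collapses to `c • (a ⊗ g)`. -/
lemma keyA (hA : HopfQuasigroup R A) (hH : HopfQuasigroup R H)
    (hAassoc : hA.mul ∘ₗ hA.mul.rTensor A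
      = hA.mul ∘ₗ hA.mul.lTensor A ∘ₗ (TensorProduct.assoc R A A A).toLinearMap)
    (Ψ : H ⊗[R] A →ₗ[R] A ⊗[R] H)
    (h1 : DL1' hA hH Ψ) (h3 : DL3 hA hH Ψ)
    (y : A ⊗[R] A) (c : R) (hc : hA.mul y = c • hA.unit) (a : A) (g : H) :
    (hA.mul.rTensor H ∘ₗ (TensorProduct.assoc R A A H).symm.toLinearMap
      ∘ₗ TensorProduct.map hA.mul Ψ
      ∘ₗ (TensorProduct.assoc R A A (H ⊗[R] A)).symm.toLinearMap
      ∘ₗ ((TensorProduct.assoc R A H A).toLinearMap).lTensor A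
      ∘ₗ (Ψ.rTensor A).lTensor A
      ∘ₗ ((TensorProduct.assoc R H A A).symm.toLinearMap).lTensor A
      ∘ₗ (TensorProduct.assoc R A H (A ⊗[R] A)).toLinearMap)
      ((a ⊗ₜ[R] g) ⊗ₜ[R] y) = c • (a ⊗ₜ[R] g) := by
  set la : A →ₗ[R] A := hA.mul ∘ₗ (TensorProduct.mk R A A) a with hla
  have key : ∀ y : A ⊗[R] A,
      (hA.mul.rTensor H ∘ₗ (TensorProduct.assoc R A A H).symm.toLinearMap
        ∘ₗ TensorProduct.map hA.mul Ψ
        ∘ₗ (TensorProduct.assoc R A A (H ⊗[R] A)).symm.toLinearMap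
        ∘ₗ ((TensorProduct.assoc R A H A).toLinearMap).lTensor A
        ∘ₗ (Ψ.rTensor A).lTensor A
        ∘ₗ ((TensorProduct.assoc R H A A).symm.toLinearMap).lTensor A
        ∘ₗ (TensorProduct.assoc R A H (A ⊗[R] A)).toLinearMap)
        ((a ⊗ₜ[R] g) ⊗ₜ[R] y)
      = (la.rTensor H) (Ψ (g ⊗ₜ[R] hA.mul y)) := by
    intro y
    induction y using TensorProduct.induction_on with
    | zero => simp
    | add u v hu hv =>
        simp only [TensorProduct.tmul_add, map_add, LinearMap.add_apply] at hu hv ⊢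
        rw [hu, hv]
    | tmul p q =>
        have e1 : Ψ (g ⊗ₜ[R] hA.mul (p ⊗ₜ[R] q))
            = (hA.mul.rTensor H ∘ₗ (TensorProduct.assoc R A A H).symm.toLinearMap
              ∘ₗ Ψ.lTensor A ∘ₗ (TensorProduct.assoc R A H A).toLinearMap
              ∘ₗ Ψ.rTensor A ∘ₗ (TensorProduct.assoc R H A A).symm.toLinearMap)
              (g ⊗ₜ[R] (p ⊗ₜ[R] q)) := by
          have := congrArg (fun f => f (g ⊗ₜ[R] (p ⊗ₜ[R] q))) h1
          simpa using this
        rw [e1]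
        simp only [LinearMap.comp_apply, TensorProduct.assoc_tmul,
          TensorProduct.assoc_symm_tmul, LinearMap.lTensor_tmul, LinearMap.rTensor_tmul,
          TensorProduct.map_tmul]
        have step2 : ∀ (b : A) (w : A ⊗[R] H),
            (hA.mul.rTensor H) ((TensorProduct.assoc R A A H).symm
              (hA.mul (a ⊗ₜ[R] b) ⊗ₜ[R] w))
            = (la.rTensor H) ((hA.mul.rTensor H) ((TensorProduct.assoc R A A H).symm
              (b ⊗ₜ[R] w))) := by
          intro b w
          induction w using TensorProduct.induction_on with
          | zero => simp
          | add u v hu hv =>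
              simp only [TensorProduct.tmul_add, map_add, hu, hv]
          | tmul d k =>
              simp only [TensorProduct.assoc_symm_tmul, LinearMap.rTensor_tmul]
              congr 1
              have := congrArg (fun f => f ((a ⊗ₜ[R] b) ⊗ₜ[R] d)) hAassoc
              simp only [LinearMap.comp_apply, LinearEquiv.coe_coe, LinearMap.rTensor_tmul,
                LinearMap.lTensor_tmul, TensorProduct.assoc_tmul] at this
              simp only [hla, LinearMap.comp_apply, TensorProduct.mk_apply]
              exact this
        have step : ∀ z : A ⊗[R] H,
            (hA.mul.rTensor H) ((TensorProduct.assoc R A A H).symm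
              ((TensorProduct.map hA.mul Ψ)
                ((TensorProduct.assoc R A A (H ⊗[R] A)).symm
                  (a ⊗ₜ[R] (TensorProduct.assoc R A H A) (z ⊗ₜ[R] q)))))
            = (la.rTensor H) ((hA.mul.rTensor H) ((TensorProduct.assoc R A A H).symm
              ((Ψ.lTensor A) ((TensorProduct.assoc R A H A) (z ⊗ₜ[R] q))))) := by
          intro z
          induction z using TensorProduct.induction_on with
          | zero => simp
          | add u v hu hv =>
              simp only [TensorProduct.tmul_add, TensorProduct.add_tmul, map_add, hu, hv]
          | tmul b m =>
              simp only [TensorProduct.assoc_tmul, TensorProduct.assoc_symm_tmul,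
                LinearMap.lTensor_tmul, LinearMap.rTensor_tmul, TensorProduct.map_tmul]
              exact step2 b (Ψ (m ⊗ₜ[R] q))
        exact step (Ψ (g ⊗ₜ[R] p))
  rw [key y, hc]
  have e : (g ⊗ₜ[R] (c • hA.unit) : H ⊗[R] A) = c • (g ⊗ₜ[R] hA.unit) :=
    (TensorProduct.tmul_smul c g hA.unit)
  rw [e, map_smul, map_smul, h3 g]
  simp [hla, hA.mul_unit_right, TensorProduct.smul_tmul']

lemma antipode_mul_left (hH : HopfQuasigroup R H) (h : H) :
    hH.mul (hH.antipode.rTensor H (hH.comul h)) = hH.counit h • hH.unit := by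
  have e := congrArg (fun f => f (h ⊗ₜ[R] hH.unit)) hH.antipode_lH₁
  simp only [LinearMap.comp_apply, LinearEquiv.coe_coe, LinearMap.rTensor_tmul] at e
  have aux : ∀ x : H ⊗[R] H,
      TensorProduct.map hH.antipode hH.mul
        ((TensorProduct.assoc R H H H) (x ⊗ₜ[R] hH.unit)) = hH.antipode.rTensor H x := by
    intro x
    induction x using TensorProduct.induction_on with
    | zero => simp
    | add u v hu hv => simp only [TensorProduct.add_tmul, map_add, hu, hv]
    | tmul p q =>
        simp [TensorProduct.assoc_tmul, hH.mul_unit_right]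
  rw [aux (hH.comul h)] at e
  simpa [TensorProduct.smul_tmul'] using e

lemma antipode_mul_right (hH : HopfQuasigroup R H) (h : H) :
    hH.mul (hH.antipode.lTensor H (hH.comul h)) = hH.counit h • hH.unit := by
  have e := congrArg (fun f => f (hH.unit ⊗ₜ[R] h)) hH.antipode_rH₂
  simp only [LinearMap.comp_apply, LinearEquiv.coe_coe, LinearMap.lTensor_tmul] at e
  have aux : ∀ x : H ⊗[R] H,
      TensorProduct.map hH.mul hH.antipode
        ((TensorProduct.assoc R H H H).symm (hH.unit ⊗ₜ[R] x)) = hH.antipode.lTensor H x := by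
    intro x
    induction x using TensorProduct.induction_on with
    | zero => simp
    | add u v hu hv => simp only [TensorProduct.tmul_add, map_add, hu, hv]
    | tmul p q =>
        simp [TensorProduct.assoc_symm_tmul, hH.mul_unit_left]
  rw [aux (hH.comul h)] at e
  simpa using e

end Aux

set_option maxHeartbeats 2000000 in
/-- If `A` and `H` are Hopf algebras (associative Hopf quasigroups) and `Ψ : H⊗A → A⊗H`
is a distributive law between the underlying monoids, then the four `a`-comonoidal
identities (adl1)–(adl4) hold automatically. -/
theorem hopfAlgebra_distLaw_aComonoidal_identities {R : Type*} [CommRing R] {A H : Type*}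
    [AddCommGroup A] [Module R A] [AddCommGroup H] [Module R H]
    (hA : HopfQuasigroup R A) (hH : HopfQuasigroup R H)
    (hAassoc : hA.mul ∘ₗ hA.mul.rTensor A
      = hA.mul ∘ₗ hA.mul.lTensor A ∘ₗ (TensorProduct.assoc R A A A).toLinearMap)
    (hHassoc : hH.mul ∘ₗ hH.mul.rTensor H
      = hH.mul ∘ₗ hH.mul.lTensor H ∘ₗ (TensorProduct.assoc R H H H).toLinearMap)
    (Ψ : H ⊗[R] A →ₗ[R] A ⊗[R] H)
    (h1 : DL1' hA hH Ψ) (h2 : DL2' hA hH Ψ) (h3 : DL3 hA hH Ψ) (h4 : DL4 hA hH Ψ) :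
    ADL1 hA hH Ψ ∧ ADL2 hA hH Ψ ∧ ADL3 hA hH Ψ ∧ ADL4 hA hH Ψ := by
  refine ⟨?_, ?_, ?_, ?_⟩
  · unfold ADL1
    apply TensorProduct.ext'
    intro h z
    induction z using TensorProduct.induction_on with
    | zero => simp
    | add u v hu hv => simp only [TensorProduct.tmul_add, map_add, hu, hv]
    | tmul a g =>
        have k := keyH hA hH hHassoc Ψ h2 h4 (hH.antipode.rTensor H (hH.comul h))
          (hH.counit h) (antipode_mul_left hH h) a g
        simp only [LinearMap.comp_apply, LinearMap.rTensor_tmul,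
          LinearEquiv.coe_coe] at k ⊢
        rw [k]
        simp [TensorProduct.smul_tmul']
  · unfold ADL2
    apply TensorProduct.ext'
    intro h z
    induction z using TensorProduct.induction_on with
    | zero => simp
    | add u v hu hv => simp only [TensorProduct.tmul_add, map_add, hu, hv]
    | tmul a g =>
        have k := keyH hA hH hHassoc Ψ h2 h4 (hH.antipode.lTensor H (hH.comul h))
          (hH.counit h) (antipode_mul_right hH h) a g
        simp only [LinearMap.comp_apply, LinearMap.rTensor_tmul,
          LinearEquiv.coe_coe] at k ⊢
        rw [k]
        simp [TensorProduct.smul_tmul']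
  · unfold ADL3
    apply TensorProduct.ext'
    intro z x
    induction z using TensorProduct.induction_on with
    | zero => simp
    | add u v hu hv => simp only [TensorProduct.add_tmul, map_add, hu, hv]
    | tmul a g =>
        have k := keyA hA hH hAassoc Ψ h1 h3 (hA.antipode.rTensor A (hA.comul x))
          (hA.counit x) (antipode_mul_left hA x) a g
        simp only [LinearMap.comp_apply, LinearMap.lTensor_tmul,
          LinearEquiv.coe_coe] at k ⊢
        rw [k]
        simp [TensorProduct.smul_tmul']
  · unfold ADL4
    apply TensorProduct.ext'
    intro z x
    induction z using TensorProduct.induction_on with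
    | zero => simp
    | add u v hu hv => simp only [TensorProduct.add_tmul, map_add, hu, hv]
    | tmul a g =>
        have k := keyA hA hH hAassoc Ψ h1 h3 (hA.antipode.lTensor A (hA.comul x))
          (hA.counit x) (antipode_mul_right hA x) a g
        simp only [LinearMap.comp_apply, LinearMap.lTensor_tmul,
          LinearEquiv.coe_coe] at k ⊢
        rw [k]
        simp [TensorProduct.smul_tmul']
end
end
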